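/- arXiv:1804.01730 — 9 statements merged into one kernel-verified Lean document; each statement's English description precedes it below -/
import Mathlib

section
/- Let φ be an entire function that is not a constant multiple of an exponential function (i.e., not of the form c·e^{az}). Then for any w₀ ∈ ℂ with φ(w₀) ≠ 0 and any δ > 0, there exist w₁, w₂ ∈ B(w₀, δ) with w₁ ≠ w₂ such that the map t ↦ log|φ(t·w₁ + (1−t)·w₂)| is strictly convex on [0,1]. -/
/-!
Along the segment `t ↦ t w₁ + (1 - t) w₂` the second derivative of `log ‖φ‖` is
`Re ((w₁ - w₂)² (φ'/φ)')`. If `(φ'/φ)'` vanished near `w₀`, then `φ'/φ` would be a constant `a`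
there, and the identity theorem would force `φ = c e^{az}`. So there is a point `u` near `w₀`
with `φ u ≠ 0` and `κ := (φ'/φ)'(u) ≠ 0`; in a direction `v` with `v² = conj κ` the second
derivative is positive at `u`, hence on a short segment starting at `u`.
-/

open Complex ComplexConjugate Metric Filter Topology

theorem hasDerivAt_log_norm {f : ℝ → ℂ} {f' : ℂ} {t : ℝ} (hf : HasDerivAt f f' t)
    (h0 : f t ≠ 0) : HasDerivAt (fun s => Real.log ‖f s‖) (f' / f t).re t := by
  have hsq : ‖f t‖ ^ 2 ≠ 0 := by positivity
  have hlog : (fun s => Real.log ‖f s‖) = fun s => Real.log (‖f s‖ ^ 2) / 2 := by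
    ext s
    rw [Real.log_pow]
    push_cast
    ring
  rw [hlog]
  refine ((hf.norm_sq.log hsq).div_const 2).congr_deriv ?_
  rw [Complex.inner, ← Complex.normSq_eq_norm_sq, div_re]
  simp only [mul_re, conj_re, conj_im]
  field_simp
  ring

theorem hasDerivAt_comp_affine {g : ℂ → ℂ} {g' : ℂ} {w₁ w₂ z : ℂ}
    (hg : HasDerivAt g g' (z * w₁ + (1 - z) * w₂)) :
    HasDerivAt (fun s => g (s * w₁ + (1 - s) * w₂)) (g' * (w₁ - w₂)) z := by
  have hL : HasDerivAt (fun s : ℂ => s * w₁ + (1 - s) * w₂) (w₁ - w₂) z :=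
    (((hasDerivAt_id z).mul_const w₁).add
      (((hasDerivAt_id z).const_sub 1).mul_const w₂)).congr_deriv (by ring)
  exact hg.comp z hL

theorem differentiableAt_logDeriv {φ : ℂ → ℂ} (hφ : Differentiable ℂ φ) {z : ℂ} (hz : φ z ≠ 0) :
    DifferentiableAt ℂ (logDeriv φ) z :=
  hφ.deriv.differentiableAt.div hφ.differentiableAt hz

theorem continuousAt_deriv_logDeriv {φ : ℂ → ℂ} (hφ : Differentiable ℂ φ) {z : ℂ} (hz : φ z ≠ 0) :
    ContinuousAt (deriv (logDeriv φ)) z := by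
  have hU : IsOpen {z | φ z ≠ 0} := isOpen_ne_fun hφ.continuous continuous_const
  have hd : DifferentiableOn ℂ (logDeriv φ) {z | φ z ≠ 0} := fun w hw =>
    (differentiableAt_logDeriv hφ hw).differentiableWithinAt
  exact (hd.deriv hU).continuousOn.continuousAt (hU.mem_nhds hz)

theorem exists_eq_const_mul_exp_of_deriv_logDeriv_eventuallyEq_zero
    {φ : ℂ → ℂ} (hφ : Differentiable ℂ φ) {w₀ : ℂ} (hw₀ : φ w₀ ≠ 0)
    (h : deriv (logDeriv φ) =ᶠ[𝓝 w₀] 0) :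
    ∃ c a : ℂ, ∀ z, φ z = c * exp (a * z) := by
  obtain ⟨r, hr, hball⟩ := Metric.eventually_nhds_iff_ball.mp
    (h.and ((hφ.continuous.continuousAt (x := w₀)).eventually_ne hw₀))
  obtain ⟨a, ha⟩ := isOpen_ball.exists_is_const_of_deriv_eq_zero (convex_ball w₀ r).isPreconnected
    (fun z hz => (differentiableAt_logDeriv hφ (hball z hz).2).differentiableWithinAt)
    fun z hz => (hball z hz).1
  have hexp : ∀ z, logDeriv (fun z => exp (a * z)) z = a := fun z => by
    rw [logDeriv_apply, (((hasDerivAt_id' z).const_mul a).cexp).deriv]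
    field_simp [exp_ne_zero]
  obtain ⟨c, -, hc⟩ := (logDeriv_eqOn_iff (g := fun z => exp (a * z)) hφ.differentiableOn
    (by fun_prop) isOpen_ball (convex_ball w₀ r).isPreconnected (fun z _ => exp_ne_zero _)
    fun z hz => (hball z hz).2).mp
    fun z hz => by rw [ha z hz, hexp]
  have hloc : φ =ᶠ[𝓝 w₀] fun z => c * exp (a * z) := by
    filter_upwards [ball_mem_nhds w₀ hr] with z hz using hc hz
  exact ⟨c, a, congrFun ((analyticOnNhd_univ_iff_differentiable.mpr hφ).eq_of_eventuallyEq
    (analyticOnNhd_univ_iff_differentiable.mpr (by fun_prop)) hloc)⟩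

theorem exists_mem_ball_deriv_logDeriv_ne_zero {φ : ℂ → ℂ} (hφ : Differentiable ℂ φ)
    (hexp : ¬ ∃ c a : ℂ, ∀ z, φ z = c * exp (a * z)) {w₀ : ℂ} (hw₀ : φ w₀ ≠ 0) {δ : ℝ}
    (hδ : 0 < δ) : ∃ u ∈ ball w₀ δ, φ u ≠ 0 ∧ deriv (logDeriv φ) u ≠ 0 := by
  by_contra! hzero
  refine hexp (exists_eq_const_mul_exp_of_deriv_logDeriv_eventuallyEq_zero hφ hw₀ ?_)
  filter_upwards [ball_mem_nhds w₀ hδ, hφ.continuous.continuousAt.eventually_ne hw₀]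
    with z hz hφz using hzero z hz hφz

theorem exists_re_sq_mul_pos {κ : ℂ} (hκ : κ ≠ 0) : ∃ v : ℂ, 0 < (v ^ 2 * κ).re := by
  obtain ⟨v, hv⟩ := IsAlgClosed.exists_pow_nat_eq (conj κ) two_pos
  refine ⟨v, ?_⟩
  rw [hv, mul_comm, mul_conj, ofReal_re]
  exact normSq_pos.mpr hκ

theorem strictConvexOn_log_norm_comp_affine {φ : ℂ → ℂ} (hφ : Differentiable ℂ φ) {w₁ w₂ : ℂ}
    (h : ∀ t ∈ Set.Icc (0 : ℝ) 1, φ (t * w₁ + (1 - t) * w₂) ≠ 0 ∧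
      0 < ((w₁ - w₂) ^ 2 * deriv (logDeriv φ) (t * w₁ + (1 - t) * w₂)).re) :
    StrictConvexOn ℝ (Set.Icc 0 1) fun t : ℝ => Real.log ‖φ (t * w₁ + (1 - t) * w₂)‖ := by
  have hd1 : ∀ t : ℝ, φ (t * w₁ + (1 - t) * w₂) ≠ 0 →
      HasDerivAt (fun s : ℝ => Real.log ‖φ (s * w₁ + (1 - s) * w₂)‖)
        ((w₁ - w₂) * logDeriv φ (t * w₁ + (1 - t) * w₂)).re t := fun t ht =>
    (hasDerivAt_log_norm (hasDerivAt_comp_affine (hφ _).hasDerivAt).comp_ofReal ht).congr_deriv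
      (by rw [logDeriv_apply]; ring_nf)
  have hd2 : ∀ t : ℝ, φ (t * w₁ + (1 - t) * w₂) ≠ 0 →
      HasDerivAt (fun s : ℝ => ((w₁ - w₂) * logDeriv φ (s * w₁ + (1 - s) * w₂)).re)
        ((w₁ - w₂) ^ 2 * deriv (logDeriv φ) (t * w₁ + (1 - t) * w₂)).re t := fun t ht =>
    ((hasDerivAt_comp_affine (differentiableAt_logDeriv hφ ht).hasDerivAt).const_mul
      (w₁ - w₂)).real_of_complex.congr_deriv (by ring_nf)
  refine strictConvexOn_of_deriv2_pos (convex_Icc 0 1)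
    (fun t ht => (hd1 t (h t ht).1).continuousAt.continuousWithinAt) fun x hx => ?_
  rw [interior_Icc] at hx
  have hderiv : deriv (fun s : ℝ => Real.log ‖φ (s * w₁ + (1 - s) * w₂)‖) =ᶠ[𝓝 x]
      fun s : ℝ => ((w₁ - w₂) * logDeriv φ (s * w₁ + (1 - s) * w₂)).re := by
    filter_upwards [Ioo_mem_nhds hx.1 hx.2] with y hy
    exact (hd1 y (h y (Set.Ioo_subset_Icc_self hy)).1).deriv
  have hxI := h x (Set.Ioo_subset_Icc_self hx)
  rw [Function.iterate_succ_apply, Function.iterate_one, hderiv.deriv_eq, (hd2 x hxI.1).deriv]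
  exact hxI.2

theorem convexity_lemma (φ : ℂ → ℂ) (hφ : Differentiable ℂ φ)
    (hexp : ¬ ∃ c a : ℂ, ∀ z : ℂ, φ z = c * Complex.exp (a * z))
    (w₀ : ℂ) (hw₀ : φ w₀ ≠ 0) (δ : ℝ) (hδ : 0 < δ) :
    ∃ w₁ ∈ ball w₀ δ, ∃ w₂ ∈ ball w₀ δ, w₁ ≠ w₂ ∧
      StrictConvexOn ℝ (Set.Icc (0:ℝ) 1)
        (fun t : ℝ => Real.log ‖φ ((t : ℂ) * w₁ + (1 - (t : ℂ)) * w₂)‖) := by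
  obtain ⟨u, hu, hφu, hκ⟩ := exists_mem_ball_deriv_logDeriv_ne_zero hφ hexp hw₀ hδ
  obtain ⟨v, hv⟩ := exists_re_sq_mul_pos hκ
  have hnear : ∀ᶠ z in 𝓝 u, z ∈ ball w₀ δ ∧ φ z ≠ 0 ∧ 0 < (v ^ 2 * deriv (logDeriv φ) z).re :=
    (isOpen_ball.eventually_mem hu).and ((hφ.continuous.continuousAt.eventually_ne hφu).and
      ((continuous_re.continuousAt.comp
        ((continuousAt_deriv_logDeriv hφ hφu).const_mul _)).eventually (lt_mem_nhds hv)))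
  obtain ⟨r, hr, hball⟩ := Metric.eventually_nhds_iff_ball.mp hnear
  obtain ⟨s, hsv, hs⟩ : ∃ s : ℝ, u + s * v ∈ ball u r ∧ 0 < s := by
    have hcont : Tendsto (fun s : ℝ => u + s * v) (𝓝 0) (𝓝 u) := by
      simpa using ((continuous_ofReal.mul continuous_const).const_add u).tendsto (0 : ℝ)
    exact (((hcont.eventually (ball_mem_nhds u hr)).filter_mono nhdsWithin_le_nhds).and
      self_mem_nhdsWithin).exists (f := 𝓝[>] (0 : ℝ))
  have hv0 : v ≠ 0 := by rintro rfl; simp at hv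
  refine ⟨u + s * v, (hball _ hsv).1, u, hu, by simp [hs.ne', hv0],
    strictConvexOn_log_norm_comp_affine hφ fun t ht => ?_⟩
  have hmem : (t : ℂ) * (u + s * v) + (1 - t) * u ∈ ball u r := by
    convert (convex_ball u r) hsv (mem_ball_self hr) ht.1 (sub_nonneg.2 ht.2) (by ring) using 1
    simp only [Complex.real_smul, ofReal_sub, ofReal_one]
  obtain ⟨-, hφz, hpos⟩ := hball _ hmem
  refine ⟨hφz, ?_⟩
  rw [show u + s * v - u = (s : ℂ) * v by ring, mul_pow, ← ofReal_pow, mul_assoc, re_ofReal_mul]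
  positivity
end

section
/- Let λ, μ ∈ ℂ with λ ≠ μ and let d ≥ 0. Then there exist a polynomial Q of degree at most d and a complex number B such that the convolution of the sequences (kᵈλᵏ)ₖ and (μᵏ)ₖ equals the sequence (Q(k)λᵏ + B·μᵏ)ₖ. -/
open Polynomial

/-- Convolution (Cauchy) product of two sequences. -/
noncomputable def conv (u v : ℕ → ℂ) : ℕ → ℂ :=
  fun k => ∑ j ∈ Finset.range (k + 1), u j * v (k - j)

lemma degree_taylor_le (p : ℂ[X]) : (taylor 1 p).degree ≤ p.degree := by
  rcases eq_or_ne p 0 with h | h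
  · simp [h]
  · have h' : taylor 1 p ≠ 0 := fun hc => h (taylor_injective 1 (by simp [hc]))
    rw [degree_eq_natDegree h', degree_eq_natDegree h, natDegree_taylor]

lemma exists_Q (lam mu : ℂ) (hne : lam ≠ mu) (d : ℕ) :
    ∃ Q : ℂ[X], Q.degree ≤ (d : ℕ) ∧
      lam • taylor 1 Q - mu • Q = lam • (X + C 1) ^ d := by
  set V := degreeLT ℂ (d + 1) with hV
  have hmem : ∀ p ∈ V, lam • taylor 1 p - mu • p ∈ V := by
    intro p hp
    rw [hV, mem_degreeLT] at hp ⊢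
    refine lt_of_le_of_lt (le_trans (degree_sub_le _ _) (max_le ?_ ?_)) hp <;>
      refine le_trans (degree_smul_le _ _) ?_
    · exact degree_taylor_le p
    · exact le_rfl
  let T : V →ₗ[ℂ] V :=
    { toFun := fun p => ⟨lam • taylor 1 (p : ℂ[X]) - mu • (p : ℂ[X]), hmem p p.2⟩
      map_add' := by
        intro p q
        ext
        simp [smul_add]
        ring
      map_smul' := by
        intro c p
        ext
        simp [smul_comm c]
        ring }
  have hinj : Function.Injective T := by
    rw [injective_iff_map_eq_zero]
    intro p hp
    have hp' : lam • taylor 1 (p : ℂ[X]) - mu • (p : ℂ[X]) = 0 := by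
      have := congrArg (Subtype.val) hp
      simpa [T] using this
    ext : 1
    by_contra h0
    have h0 : (p : ℂ[X]) ≠ 0 := by simpa using h0
    set n := (p : ℂ[X]).natDegree with hn
    have hc1 : (taylor 1 (p : ℂ[X])).coeff n = (p : ℂ[X]).leadingCoeff := by
      have hdeg : (taylor 1 (p : ℂ[X])).natDegree = n := natDegree_taylor _ _
      rw [← hdeg, coeff_natDegree, taylor_apply, leadingCoeff_comp]
      · rw [leadingCoeff_X_add_C, one_pow, mul_one]
      · rw [natDegree_X_add_C]; exact one_ne_zero
    have hthis := congrArg (fun q => Polynomial.coeff q n) hp'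
    simp only [coeff_sub, coeff_smul, hc1, smul_eq_mul, coeff_zero] at hthis
    have hcn : (p : ℂ[X]).coeff n = (p : ℂ[X]).leadingCoeff := rfl
    have h2 : (lam - mu) * (p : ℂ[X]).leadingCoeff = 0 := by
      linear_combination hthis + mu * hcn
    rcases mul_eq_zero.mp h2 with h | h
    · exact hne (sub_eq_zero.mp h)
    · exact h0 (leadingCoeff_eq_zero.mp h)
  have hsurj : Function.Surjective T := by
    have : FiniteDimensional ℂ V := (degreeLTEquiv ℂ (d + 1)).symm.finiteDimensional
    exact (LinearMap.injective_iff_surjective).mp hinj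
  have htarget : lam • (X + C 1) ^ d ∈ V := by
    rw [hV, mem_degreeLT]
    refine lt_of_le_of_lt (degree_smul_le _ _) ?_
    refine lt_of_le_of_lt (degree_pow_le _ _) ?_
    have h1 : ((X + C 1 : ℂ[X])).degree = 1 := degree_X_add_C (1 : ℂ)
    rw [h1]
    rw [nsmul_eq_mul, mul_one]
    exact_mod_cast Nat.lt_succ_self d
  obtain ⟨P, hP⟩ := hsurj ⟨lam • (X + C 1) ^ d, htarget⟩
  refine ⟨P, ?_, ?_⟩
  · have h2 : (P : ℂ[X]) ∈ degreeLE ℂ (d : ℕ) := by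
      rw [← degreeLT_succ_eq_degreeLE]
      exact P.2
    exact mem_degreeLE.mp h2
  · have := congrArg (Subtype.val) hP
    simpa [T] using this

theorem conv_monomial_geom_distinct (lam mu : ℂ) (hne : lam ≠ mu) (d : ℕ) :
    ∃ Q : Polynomial ℂ, ∃ B : ℂ, Q.degree ≤ (d : ℕ) ∧
      ∀ k : ℕ, conv (fun k => (k : ℂ) ^ d * lam ^ k) (fun k => mu ^ k) k
        = Q.eval (k : ℂ) * lam ^ k + B * mu ^ k := by
  obtain ⟨Q, hdeg, hQ⟩ := exists_Q lam mu hne d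
  refine ⟨Q, (0 : ℂ) ^ d - Q.eval 0, hdeg, ?_⟩
  intro k
  induction k with
  | zero => simp [conv]
  | succ k ih =>
    have hrec : conv (fun k => (k : ℂ) ^ d * lam ^ k) (fun k => mu ^ k) (k + 1)
        = mu * conv (fun k => (k : ℂ) ^ d * lam ^ k) (fun k => mu ^ k) k
          + ((k : ℂ) + 1) ^ d * lam ^ (k + 1) := by
      unfold conv
      rw [Finset.sum_range_succ]
      congr 1
      · rw [Finset.mul_sum]
        refine Finset.sum_congr rfl fun j hj => ?_
        have hj' : j ≤ k := Nat.lt_succ_iff.mp (Finset.mem_range.mp hj)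
        have h3 : k + 1 - j = (k - j) + 1 := by omega
        simp only [h3, pow_succ]
        ring
      · push_cast
        simp [Nat.sub_self]
    have hfun : lam * Q.eval ((k : ℂ) + 1) - mu * Q.eval (k : ℂ)
        = lam * ((k : ℂ) + 1) ^ d := by
      have := congrArg (Polynomial.eval (k : ℂ)) hQ
      simpa [taylor_apply, eval_comp] using this
    rw [hrec, ih]
    push_cast
    linear_combination (-(lam ^ k)) * hfun
end

section
/- Let P ∈ ℂ[X] and d ≥ 0, and let B denote the backward shift on sequences. Then there exist polynomials Q_{d,s} ∈ ℂ[X] for 0 ≤ s ≤ d such that for every λ ∈ ℂ with |λ| < 1, P(B)(kᵈλᵏ) = Σ_{s=0}^{d} Q_{d,s}(λ)·(kˢλᵏ), where Q_{d,d}(λ) = P(λ) and Q_{d,d−1}(λ) = d·λ·P′(λ). -/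
/-- The backward shift on sequences. -/
def shift (u : ℕ → ℂ) : ℕ → ℂ := fun k => u (k + 1)

/-- A polynomial `P` applied to the backward shift, acting on a sequence:
`(P(B)u)(k) = ∑ᵢ cᵢ u(k+i)`. -/
noncomputable def polyShift (P : Polynomial ℂ) (u : ℕ → ℂ) : ℕ → ℂ :=
  fun k => ∑ i ∈ Finset.range (P.natDegree + 1), P.coeff i * u (k + i)

/-!
Expanding `(k + i)ᵈ` binomially in `P(B)(kᵈλᵏ)(k) = ∑ᵢ cᵢ (k + i)ᵈ λᵏ⁺ⁱ` and collecting powers of `k`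
gives `Q_{d,s} = (d choose s) θᵈ⁻ˢ P`, where `θ = X d/dX` is the Euler operator: it multiplies the
coefficient of `Xⁱ` by `i`. Thus `Q_{d,d} = P` and `Q_{d,d-1} = d X P'`.
-/

open Finset

namespace Polynomial

variable {R : Type*}

noncomputable def eulerOp [Semiring R] (p : R[X]) : R[X] := X * derivative p

theorem coeff_eulerOp [Semiring R] (p : R[X]) (i : ℕ) :
    (eulerOp p).coeff i = i * p.coeff i := by
  cases i with
  | zero => simp [eulerOp]
  | succ j => rw [eulerOp, coeff_X_mul, coeff_derivative, Nat.cast_comm]; push_cast; rfl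

theorem coeff_eulerOp_iterate [Semiring R] (m : ℕ) (p : R[X]) (i : ℕ) :
    (eulerOp^[m] p).coeff i = (i : R) ^ m * p.coeff i := by
  induction m with
  | zero => simp
  | succ m ih => rw [Function.iterate_succ_apply', coeff_eulerOp, ih, pow_succ', mul_assoc]

theorem natDegree_eulerOp_iterate_le [Semiring R] (m : ℕ) (p : R[X]) :
    (eulerOp^[m] p).natDegree ≤ p.natDegree :=
  natDegree_le_iff_coeff_eq_zero.2 fun i hi => by
    rw [coeff_eulerOp_iterate, coeff_eq_zero_of_natDegree_lt hi, mul_zero]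

theorem eval_eulerOp_iterate [CommSemiring R] (m : ℕ) (p : R[X]) (x : R) :
    (eulerOp^[m] p).eval x = ∑ i ∈ range (p.natDegree + 1), (i : R) ^ m * p.coeff i * x ^ i := by
  rw [eval_eq_sum_range' (Nat.lt_succ_of_le (natDegree_eulerOp_iterate_le m p))]
  simp only [coeff_eulerOp_iterate]

end Polynomial

open Polynomial

theorem polyShift_pow_mul_geom (P : ℂ[X]) (d : ℕ) (lam : ℂ) (k : ℕ) :
    polyShift P (fun k => (k : ℂ) ^ d * lam ^ k) k
      = ∑ s ∈ range (d + 1), (d.choose s * (eulerOp^[d - s] P).eval lam) * ((k : ℂ) ^ s * lam ^ k) := by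
  have binomial : ∀ i, P.coeff i * (((k + i : ℕ) : ℂ) ^ d * lam ^ (k + i))
      = ∑ s ∈ range (d + 1),
          d.choose s * ((i : ℂ) ^ (d - s) * P.coeff i * lam ^ i) * ((k : ℂ) ^ s * lam ^ k) := by
    intro i
    rw [Nat.cast_add, add_pow, pow_add, sum_mul, mul_sum]
    exact sum_congr rfl fun s _ => by ring
  simp only [polyShift, binomial, eval_eulerOp_iterate, mul_sum, sum_mul]
  exact sum_comm

theorem polyShift_monomial_geom (P : Polynomial ℂ) (d : ℕ) :
    ∃ Q : ℕ → Polynomial ℂ,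
      ∀ lam : ℂ, ‖lam‖ < 1 →
        (∀ k : ℕ, polyShift P (fun k => (k : ℂ) ^ d * lam ^ k) k
            = ∑ s ∈ Finset.range (d + 1), (Q s).eval lam * ((k : ℂ) ^ s * lam ^ k)) ∧
        (Q d).eval lam = P.eval lam ∧
        (1 ≤ d → (Q (d - 1)).eval lam = (d : ℂ) * lam * P.derivative.eval lam) := by
  refine ⟨fun s => C (d.choose s : ℂ) * eulerOp^[d - s] P,
    fun lam _ => ⟨fun k => ?_, by simp, fun hd => ?_⟩⟩
  · simpa only [eval_mul, eval_C] using polyShift_pow_mul_geom P d lam k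
  · obtain ⟨m, rfl⟩ : ∃ m, d = m + 1 := ⟨d - 1, by omega⟩
    simp [Nat.choose_succ_self_right, eulerOp, mul_assoc]
end

section
/- Let P ∈ ℂ[X], d ≥ 0, and λ ∈ ℂ with |λ| < 1 and λ·P(λ)·P′(λ) ≠ 0. Then there exist complex numbers A_{d,N,s} (N ≥ 0, 0 ≤ s ≤ d) such that for all N ≥ 0, P(B)^N(kᵈλᵏ) = Σ_{s=0}^{d} P(λ)^{N+s−d} A_{d,N,s} (kˢλᵏ), where A_{d,N,d} = 1 for all N and A_{d,N,d−1} = N·d·λ·P′(λ), and for each s, A_{d,N,s} ∼ ω_{d,s}·N^{d−s} as N → ∞ for some nonzero ω_{d,s} ∈ ℂ. -/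
open Filter

open Filter Polynomial Finset



/-- `(X+1)^(n+1) - X^(n+1)` expanded. -/
lemma deltaPow (n : ℕ) :
    ((X + 1 : ℂ[X]) ^ (n+1) - X ^ (n+1)) = ∑ k ∈ range (n+1), C ((n+1).choose k : ℂ) * X ^ k := by
  have h := add_pow (X : ℂ[X]) 1 (n+1)
  rw [Finset.sum_range_succ] at h
  simp only [one_pow, mul_one, Nat.choose_self, Nat.cast_one] at h
  rw [h]
  ring_nf
  apply Finset.sum_congr rfl
  intro k hk
  rw [Polynomial.C_eq_natCast]

lemma deltaPow_natDegree_le (a : ℂ) (n : ℕ) :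
    ((C a * X ^ (n+1)).comp (X + 1) - C a * X ^ (n+1)).natDegree ≤ n := by
  rw [mul_comp, C_comp, pow_comp, X_comp, ← mul_sub, deltaPow, Finset.mul_sum]
  refine (natDegree_sum_le _ _).trans ?_
  rw [Finset.fold_max_le]
  refine ⟨Nat.zero_le _, ?_⟩
  intro k hk
  simp only [Function.comp_apply]
  rw [← mul_assoc, ← C_mul]
  refine (natDegree_C_mul_le _ _).trans ?_
  rw [natDegree_X_pow]
  exact Nat.lt_succ_iff.mp (Finset.mem_range.mp hk)

lemma deltaPow_coeff (a : ℂ) (n : ℕ) :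
    ((C a * X ^ (n+1)).comp (X + 1) - C a * X ^ (n+1)).coeff n = a * (n+1) := by
  rw [mul_comp, C_comp, pow_comp, X_comp, ← mul_sub, deltaPow, Finset.mul_sum]
  rw [finset_sum_coeff]
  rw [Finset.sum_eq_single n]
  · rw [← mul_assoc, ← C_mul, coeff_C_mul, coeff_X_pow, if_pos rfl, mul_one,
      Nat.choose_succ_self_right]
    push_cast; ring
  · intro k hk hkn
    rw [← mul_assoc, ← C_mul, coeff_C_mul, coeff_X_pow, if_neg (fun h => hkn h.symm), mul_zero]
  · intro h; exact absurd (Finset.self_mem_range_succ n) h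


lemma natDegree_lt_of_coeff_zero (p : ℂ[X]) (n : ℕ) (hn : n ≠ 0)
    (hle : p.natDegree ≤ n) (hc : p.coeff n = 0) : p.natDegree < n := by
  rcases eq_or_ne p 0 with rfl | hp
  · simp only [natDegree_zero]; omega
  · refine lt_of_le_of_ne hle ?_
    intro h
    exact hp (leadingCoeff_eq_zero.mp (by rw [leadingCoeff, h]; exact hc))

lemma remainder_lt (q : ℂ[X]) (h : q.natDegree ≠ 0) :
    (q - ((C (q.leadingCoeff / (q.natDegree+1)) * X ^ (q.natDegree + 1)).comp (X + 1)
        - C (q.leadingCoeff / (q.natDegree+1)) * X ^ (q.natDegree + 1))).natDegree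
      < q.natDegree := by
  set n := q.natDegree with hn
  set a := q.leadingCoeff / ((n : ℂ)+1) with ha
  refine natDegree_lt_of_coeff_zero _ _ h ?_ ?_
  · exact (natDegree_sub_le _ _).trans (max_le (le_refl _) (deltaPow_natDegree_le a n))
  · rw [coeff_sub, deltaPow_coeff]
    have hcast : ((n : ℂ) + 1) ≠ 0 := Nat.cast_add_one_ne_zero n
    have : a * ((n : ℂ) + 1) = q.leadingCoeff := by
      rw [ha]; field_simp
    rw [this, ← leadingCoeff]
    ring

noncomputable def antider (q : ℂ[X]) : ℂ[X] :=
  if h : q.natDegree = 0 then C (q.coeff 0) * X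
  else
    C (q.leadingCoeff / (q.natDegree+1)) * X ^ (q.natDegree + 1) +
      antider (q - ((C (q.leadingCoeff / (q.natDegree+1)) * X ^ (q.natDegree + 1)).comp (X + 1)
        - C (q.leadingCoeff / (q.natDegree+1)) * X ^ (q.natDegree + 1)))
termination_by q.natDegree
decreasing_by exact remainder_lt q h

lemma antider_spec (q : ℂ[X]) :
    (antider q).comp (X + 1) - antider q = q ∧ (antider q).eval 0 = 0 ∧
      (antider q).natDegree ≤ q.natDegree + 1 ∧
      (antider q).coeff (q.natDegree + 1) = q.leadingCoeff / (q.natDegree + 1) := by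
  generalize hD : q.natDegree = D
  induction D using Nat.strong_induction_on generalizing q with
  | _ D ih =>
    subst hD
    rcases Nat.eq_zero_or_pos q.natDegree with hD | hD0
    · rw [antider, dif_pos hD]
      have hq : q = C (q.coeff 0) := (Polynomial.eq_C_of_natDegree_eq_zero hD)
      refine ⟨?_, by simp, ?_, ?_⟩
      · rw [mul_comp, C_comp, X_comp]
        nth_rewrite 3 [hq]
        ring
      · rw [hD]
        exact (natDegree_C_mul_le _ _).trans (by simp)
      · rw [hD, coeff_C_mul, Polynomial.coeff_X_one, mul_one]
        rw [leadingCoeff, hD]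
        simp
    · have hne : q.natDegree ≠ 0 := by omega
      rw [antider, dif_neg hne]
      set a := q.leadingCoeff / ((q.natDegree : ℂ)+1) with ha
      set Q0 : ℂ[X] := C a * X ^ (q.natDegree + 1) with hQ0
      set r := q - (Q0.comp (X + 1) - Q0) with hr
      have hrlt : r.natDegree < q.natDegree := remainder_lt q hne
      obtain ⟨h1, h2, h3, h4⟩ := ih r.natDegree hrlt r rfl
      refine ⟨?_, ?_, ?_, ?_⟩
      · rw [add_comp]
        rw [sub_eq_iff_eq_add] at h1 ⊢
        rw [h1, hr]; ring
      · rw [eval_add, h2, hQ0, eval_mul, eval_pow, eval_X, zero_pow (by omega), mul_zero, zero_add]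
      · refine (natDegree_add_le _ _).trans (max_le ?_ ?_)
        · exact (natDegree_C_mul_le _ _).trans (by rw [natDegree_X_pow])
        · omega
      · rw [coeff_add]
        have h0 : (antider r).coeff (q.natDegree + 1) = 0 :=
          coeff_eq_zero_of_natDegree_lt (by omega)
        rw [h0, add_zero, hQ0, coeff_C_mul, coeff_X_pow, if_pos rfl, mul_one, ha]


/-- Sequence of coefficient polynomials: `Gm w m` evaluated at `N` gives
`fseq Φ N m / Φ 0 ^ N` where `w j = Φ j / Φ 0`. -/
noncomputable def Gm (w : ℕ → ℂ) : ℕ → ℂ[X]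
  | 0 => 1
  | (m+1) => antider (∑ j ∈ Finset.range (m+1),
      C (((m+1).choose (j+1) : ℂ) * w (j+1)) * Gm w (m - j))
termination_by m => m
decreasing_by omega

noncomputable def fseq (Φ : ℕ → ℂ) : ℕ → ℕ → ℂ
  | 0 => fun m => if m = 0 then 1 else 0
  | (N+1) => fun m => ∑ j ∈ Finset.range (m+1), (m.choose j : ℂ) * Φ j * fseq Φ N (m - j)

noncomputable def phiP (P : Polynomial ℂ) (lam : ℂ) (m : ℕ) : ℂ :=
  ∑ i ∈ Finset.range (P.natDegree + 1), P.coeff i * (i : ℂ) ^ m * lam ^ i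

/-- degree and top coefficient of `Gm`. -/
lemma Gm_deg (w : ℕ → ℂ) (hw : w 1 ≠ 0) (m : ℕ) :
    (Gm w m).natDegree = m ∧ (Gm w m).coeff m = (w 1) ^ m := by
  induction m using Nat.strong_induction_on with
  | _ m ih =>
    match m with
    | 0 => simp [Gm]
    | (m+1) =>
      rw [Gm]
      set q := ∑ j ∈ Finset.range (m+1),
        C (((m+1).choose (j+1) : ℂ) * w (j+1)) * Gm w (m - j) with hq
      have hqdegle : q.natDegree ≤ m := by
        rw [hq]
        refine (natDegree_sum_le _ _).trans ?_
        rw [Finset.fold_max_le]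
        refine ⟨Nat.zero_le _, fun j hj => ?_⟩
        simp only [Function.comp_apply]
        refine (natDegree_C_mul_le _ _).trans ?_
        rw [(ih (m - j) (by omega)).1]
        omega
      have hqcoeff : q.coeff m = ((m+1 : ℕ) : ℂ) * w 1 * (w 1) ^ m := by
        rw [hq, finset_sum_coeff, Finset.sum_eq_single 0]
        · rw [coeff_C_mul, Nat.sub_zero, (ih m (by omega)).2]
          norm_num
        · intro j hj hj0
          have hj' := Finset.mem_range.mp hj
          have : (Gm w (m - j)).natDegree < m := by rw [(ih (m - j) (by omega)).1]; omega
          rw [coeff_C_mul, coeff_eq_zero_of_natDegree_lt this, mul_zero]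
        · intro h; exact absurd (Finset.mem_range.mpr (by omega)) h
      have hmc : ((m+1 : ℕ) : ℂ) ≠ 0 := Nat.cast_ne_zero.mpr (by omega)
      have hqc0 : q.coeff m ≠ 0 := by
        rw [hqcoeff]
        exact mul_ne_zero (mul_ne_zero hmc hw) (pow_ne_zero _ hw)
      have hqdeg : q.natDegree = m :=
        le_antisymm hqdegle (le_natDegree_of_ne_zero hqc0)
      obtain ⟨-, -, h3, h4⟩ := antider_spec q
      have hlead : q.leadingCoeff = ((m+1 : ℕ) : ℂ) * w 1 * (w 1) ^ m := by
        rw [leadingCoeff, hqdeg, hqcoeff]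
      have hcoeffval : (antider q).coeff (m+1) = (w 1) ^ (m+1) := by
        rw [hqdeg] at h4
        rw [h4, hlead]
        have : ((m : ℂ) + 1) = ((m+1 : ℕ) : ℂ) := by push_cast; ring
        rw [this, mul_assoc, mul_div_cancel_left₀ _ hmc, ← pow_succ']
      constructor
      · refine le_antisymm ?_ (le_natDegree_of_ne_zero ?_)
        · rw [hqdeg] at h3; exact h3
        · rw [hcoeffval]; exact pow_ne_zero _ hw
      · exact hcoeffval

lemma Gm_eval_zero (w : ℕ → ℂ) (m : ℕ) : (Gm w (m+1)).eval 0 = 0 := by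
  rw [Gm]; exact (antider_spec _).2.1

lemma Gm_step (w : ℕ → ℂ) (m : ℕ) (x : ℂ) :
    (Gm w (m+1)).eval (x+1) = (Gm w (m+1)).eval x +
      ∑ j ∈ Finset.range (m+1), ((m+1).choose (j+1) : ℂ) * w (j+1) * (Gm w (m - j)).eval x := by
  rw [Gm]
  set q := ∑ j ∈ Finset.range (m+1),
    C (((m+1).choose (j+1) : ℂ) * w (j+1)) * Gm w (m - j) with hq
  have h1 := (antider_spec q).1
  have := congrArg (eval x) h1
  rw [eval_sub, eval_comp, eval_add, eval_X, eval_one, sub_eq_iff_eq_add] at this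
  rw [this, hq, eval_finset_sum]
  rw [add_comm]
  congr 1
  apply Finset.sum_congr rfl
  intro j hj
  rw [eval_mul, eval_C]


lemma fseq_step (Φ : ℕ → ℂ) (N m : ℕ) :
    fseq Φ (N+1) (m+1) = Φ 0 * fseq Φ N (m+1) +
      ∑ j ∈ Finset.range (m+1), ((m+1).choose (j+1) : ℂ) * Φ (j+1) * fseq Φ N (m - j) := by
  show (∑ j ∈ Finset.range (m+2), ((m+1).choose j : ℂ) * Φ j * fseq Φ N (m+1-j)) = _
  rw [Finset.sum_range_succ']
  simp only [Nat.choose_zero_right, Nat.cast_one, one_mul, Nat.sub_zero]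
  have h2 : ∀ j ∈ Finset.range (m+1), ((m+1).choose (j+1):ℂ) * Φ (j+1) * fseq Φ N (m+1-(j+1))
      = ((m+1).choose (j+1):ℂ) * Φ (j+1) * fseq Φ N (m-j) := by
    intro j hj
    congr 2
    omega
  rw [Finset.sum_congr rfl h2, add_comm]

lemma fseq_zero (Φ : ℕ → ℂ) (N : ℕ) : fseq Φ N 0 = (Φ 0) ^ N := by
  induction N with
  | zero => simp [fseq]
  | succ N ih =>
    show (∑ j ∈ Finset.range 1, ((0:ℕ).choose j : ℂ) * Φ j * fseq Φ N (0 - j)) = _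
    rw [Finset.sum_range_one, ih]
    simp [pow_succ]
    ring

lemma fseq_one (Φ : ℕ → ℂ) (h0 : Φ 0 ≠ 0) (N : ℕ) :
    fseq Φ N 1 = (N : ℂ) * Φ 1 * (Φ 0) ^ N / Φ 0 := by
  induction N with
  | zero => simp [fseq]
  | succ N ih =>
    have h := fseq_step Φ N 0
    rw [Finset.sum_range_one] at h
    norm_num at h
    rw [h, ih, fseq_zero]
    field_simp
    push_cast
    ring

lemma fseq_eq (Φ : ℕ → ℂ) (h0 : Φ 0 ≠ 0) (m N : ℕ) :
    fseq Φ N m = (Φ 0) ^ N * (Gm (fun j => Φ j / Φ 0) m).eval (N : ℂ) := by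
  induction m using Nat.strong_induction_on generalizing N with
  | _ m ih =>
    match m with
    | 0 => rw [fseq_zero]; simp [Gm]
    | (m+1) =>
      induction N with
      | zero =>
        simp [fseq, Gm_eval_zero]
      | succ N ihN =>
        rw [fseq_step, ihN]
        have hsum : ∀ j ∈ Finset.range (m+1),
            ((m+1).choose (j+1) : ℂ) * Φ (j+1) * fseq Φ N (m - j)
              = (Φ 0) ^ (N+1) * (((m+1).choose (j+1) : ℂ) * (Φ (j+1) / Φ 0) *
                  (Gm (fun j => Φ j / Φ 0) (m - j)).eval (N : ℂ)) := by
          intro j hj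
          rw [ih (m - j) (by omega) N]
          field_simp
          ring
        rw [Finset.sum_congr rfl hsum, ← Finset.mul_sum]
        have hc : ((N+1 : ℕ) : ℂ) = (N : ℂ) + 1 := by push_cast; ring
        rw [hc, Gm_step]
        ring


lemma phiP_zero (P : Polynomial ℂ) (lam : ℂ) : phiP P lam 0 = P.eval lam := by
  rw [phiP, Polynomial.eval_eq_sum_range]
  apply Finset.sum_congr rfl
  intro i hi
  rw [pow_zero, mul_one]

lemma phiP_one (P : Polynomial ℂ) (lam : ℂ) : phiP P lam 1 = lam * P.derivative.eval lam := by
  have hd : P.derivative.natDegree < P.natDegree + 1 :=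
    Nat.lt_succ_of_le ((Polynomial.natDegree_derivative_le P).trans (Nat.sub_le _ _))
  rw [Polynomial.eval_eq_sum_range' hd, Finset.mul_sum]
  rw [phiP, Finset.sum_range_succ']
  have htop : ∀ i ∈ Finset.range (P.natDegree + 1),
      lam * (P.derivative.coeff i * lam ^ i) = P.coeff (i+1) * ((i+1 : ℕ) : ℂ) * lam ^ (i+1) := by
    intro i hi
    rw [Polynomial.coeff_derivative]
    push_cast
    ring
  rw [Finset.sum_congr rfl htop, Finset.sum_range_succ]
  have hz : P.coeff (P.natDegree + 1) = 0 :=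
    Polynomial.coeff_eq_zero_of_natDegree_lt (Nat.lt_succ_self _)
  rw [hz]
  simp only [Nat.cast_zero, zero_mul, mul_zero, pow_one, add_zero, Nat.cast_ofNat, pow_zero, mul_one]

/-- single-application expansion. -/
lemma polyShift_monomial (P : Polynomial ℂ) (lam : ℂ) (d k : ℕ) :
    polyShift P (fun x => (x : ℂ) ^ d * lam ^ x) k
      = ∑ s ∈ Finset.range (d+1), (d.choose s : ℂ) * phiP P lam (d - s) * ((k:ℂ) ^ s * lam ^ k) := by
  rw [polyShift]
  have hterm : ∀ i ∈ Finset.range (P.natDegree + 1),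
      P.coeff i * (((k + i : ℕ) : ℂ) ^ d * lam ^ (k + i))
        = ∑ s ∈ Finset.range (d+1),
            (d.choose s : ℂ) * (P.coeff i * (i:ℂ) ^ (d - s) * lam ^ i) * ((k:ℂ) ^ s * lam ^ k) := by
    intro i hi
    have : ((k + i : ℕ) : ℂ) ^ d = ∑ s ∈ Finset.range (d+1),
        (k:ℂ) ^ s * (i:ℂ) ^ (d - s) * (d.choose s : ℂ) := by
      push_cast
      exact add_pow (k:ℂ) (i:ℂ) d
    rw [this, pow_add, Finset.sum_mul, Finset.mul_sum]
    apply Finset.sum_congr rfl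
    intro s hs
    ring
  rw [Finset.sum_congr rfl hterm, Finset.sum_comm]
  apply Finset.sum_congr rfl
  intro s hs
  rw [phiP, Finset.mul_sum, Finset.sum_mul]

/-- linearity of polyShift over finite combinations of sequences. -/
lemma polyShift_sum (P : Polynomial ℂ) (n : ℕ) (a : ℕ → ℂ) (v : ℕ → ℕ → ℂ) (k : ℕ) :
    polyShift P (fun x => ∑ s ∈ Finset.range n, a s * v s x) k
      = ∑ s ∈ Finset.range n, a s * polyShift P (v s) k := by
  rw [polyShift]
  simp only [polyShift, Finset.mul_sum]
  rw [Finset.sum_comm]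
  apply Finset.sum_congr rfl
  intro s hs
  apply Finset.sum_congr rfl
  intro i hi
  ring

lemma iterate_expansion (P : Polynomial ℂ) (lam : ℂ) (d : ℕ) :
    ∀ N k, (polyShift P)^[N] (fun x => (x : ℂ) ^ d * lam ^ x) k
      = ∑ s ∈ Finset.range (d+1),
          (d.choose s : ℂ) * fseq (phiP P lam) N (d - s) * ((k:ℂ) ^ s * lam ^ k) := by
  intro N
  induction N with
  | zero =>
    intro k
    simp only [Function.iterate_zero, id_eq]
    rw [Finset.sum_eq_single d]
    · simp [fseq]
    · intro s hs hsd
      have : d - s ≠ 0 := by have := Finset.mem_range.mp hs; omega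
      simp [fseq, this]
    · intro h; exact absurd (Finset.self_mem_range_succ d) h
  | succ N ih =>
    intro k
    rw [Function.iterate_succ_apply']
    have hfun : (polyShift P)^[N] (fun x => (x : ℂ) ^ d * lam ^ x)
        = fun (x : ℕ) => ∑ s ∈ Finset.range (d+1),
            ((d.choose s : ℂ) * fseq (phiP P lam) N (d - s)) * ((x:ℂ) ^ s * lam ^ x) :=
      funext fun x => ih x
    rw [hfun, polyShift_sum P (d+1) _ (fun s x => (x:ℂ) ^ s * lam ^ x) k]
    have hexp : ∀ s ∈ Finset.range (d+1),
        (d.choose s : ℂ) * fseq (phiP P lam) N (d - s) * polyShift P (fun x => (x:ℂ) ^ s * lam ^ x) k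
          = ∑ t ∈ Finset.range (s+1), ((d.choose s : ℂ) * fseq (phiP P lam) N (d - s) *
              ((s.choose t : ℂ) * phiP P lam (s - t))) * ((k:ℂ) ^ t * lam ^ k) := by
      intro s hs
      rw [polyShift_monomial, Finset.mul_sum]
      apply Finset.sum_congr rfl
      intro t ht
      ring
    rw [Finset.sum_congr rfl hexp]
    -- now a triangular double sum; swap order
    have hswap : ∑ s ∈ Finset.range (d+1), ∑ t ∈ Finset.range (s+1),
        ((d.choose s : ℂ) * fseq (phiP P lam) N (d - s) *
          ((s.choose t : ℂ) * phiP P lam (s - t))) * ((k:ℂ) ^ t * lam ^ k)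
        = ∑ t ∈ Finset.range (d+1), ∑ s ∈ Finset.Ico t (d+1),
            ((d.choose s : ℂ) * fseq (phiP P lam) N (d - s) *
              ((s.choose t : ℂ) * phiP P lam (s - t))) * ((k:ℂ) ^ t * lam ^ k) := by
      simp only [Finset.range_eq_Ico]
      rw [← Finset.sum_Ico_Ico_comm 0 (d+1) (fun t s =>
        ((d.choose s : ℂ) * fseq (phiP P lam) N (d - s) *
          ((s.choose t : ℂ) * phiP P lam (s - t))) * ((k:ℂ) ^ t * lam ^ k))]
    rw [hswap]
    apply Finset.sum_congr rfl
    intro t ht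
    have htd : t ≤ d := Nat.lt_succ_iff.mp (Finset.mem_range.mp ht)
    rw [Finset.sum_Ico_eq_sum_range]
    have hrange : d + 1 - t = (d - t) + 1 := by omega
    rw [hrange]
    show _ = (d.choose t : ℂ) * fseq (phiP P lam) (N+1) (d - t) * ((k:ℂ) ^ t * lam ^ k)
    have hstep : fseq (phiP P lam) (N+1) (d-t) = ∑ j ∈ Finset.range ((d-t)+1),
        ((d-t).choose j : ℂ) * phiP P lam j * fseq (phiP P lam) N (d - t - j) := rfl
    rw [hstep, Finset.mul_sum, Finset.sum_mul]
    apply Finset.sum_congr rfl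
    intro j hj
    have hjd : j ≤ d - t := Nat.lt_succ_iff.mp (Finset.mem_range.mp hj)
    have hchoose : (d.choose (t+j) : ℂ) * ((t+j).choose t : ℂ)
        = (d.choose t : ℂ) * ((d-t).choose j : ℂ) := by
      have := Nat.choose_mul (n := d) (show t ≤ t + j by omega)
      have h2 : t + j - t = j := by omega
      rw [h2] at this
      exact_mod_cast this
    have h1 : d - (t+j) = d - t - j := by omega
    have h2 : t + j - t = j := by omega
    rw [h1, h2]
    calc (d.choose (t+j) : ℂ) * fseq (phiP P lam) N (d-t-j) *
          (((t+j).choose t : ℂ) * phiP P lam j) * ((k:ℂ)^t * lam^k)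
        = ((d.choose (t+j) : ℂ) * ((t+j).choose t : ℂ)) *
            (fseq (phiP P lam) N (d-t-j) * phiP P lam j * ((k:ℂ)^t * lam^k)) := by ring
      _ = ((d.choose t : ℂ) * ((d-t).choose j : ℂ)) *
            (fseq (phiP P lam) N (d-t-j) * phiP P lam j * ((k:ℂ)^t * lam^k)) := by rw [hchoose]
      _ = (d.choose t : ℂ) * (((d-t).choose j : ℂ) * phiP P lam j * fseq (phiP P lam) N (d-t-j)) *
            ((k:ℂ)^t * lam^k) := by ring


lemma tendsto_eval_div (g : ℂ[X]) (m : ℕ) (hdeg : g.natDegree = m) (hl : g.coeff m ≠ 0) :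
    Tendsto (fun N : ℕ => g.eval (N:ℂ) / (g.coeff m * (N:ℂ)^m)) atTop (nhds 1) := by
  have hev : ∀ N : ℕ, g.eval (N:ℂ) = ∑ j ∈ Finset.range (m+1), g.coeff j * (N:ℂ)^j := by
    intro N
    rw [Polynomial.eval_eq_sum_range, hdeg]
  have hmain : Tendsto (fun N : ℕ => ∑ j ∈ Finset.range (m+1),
      g.coeff j * (N:ℂ)^j / (g.coeff m * (N:ℂ)^m)) atTop
      (nhds (∑ j ∈ Finset.range (m+1), if j = m then (1:ℂ) else 0)) := by
    apply tendsto_finset_sum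
    intro j hj
    have hjm : j ≤ m := Nat.lt_succ_iff.mp (Finset.mem_range.mp hj)
    rcases eq_or_lt_of_le hjm with rfl | hlt
    · rw [if_pos rfl]
      apply Tendsto.congr' _ tendsto_const_nhds
      filter_upwards [eventually_ge_atTop 1] with N hN
      have hN0 : (N:ℂ) ≠ 0 := Nat.cast_ne_zero.mpr (by omega)
      rw [div_self (mul_ne_zero hl (pow_ne_zero _ hN0))]
    · rw [if_neg (by omega)]
      have heq : ∀ᶠ N : ℕ in atTop,
          (g.coeff j / g.coeff m) * ((N:ℂ)⁻¹)^(m-j) = g.coeff j * (N:ℂ)^j / (g.coeff m * (N:ℂ)^m) := by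
        filter_upwards [eventually_ge_atTop 1] with N hN
        have hN0 : (N:ℂ) ≠ 0 := Nat.cast_ne_zero.mpr (by omega)
        have hm : (N:ℂ)^m = (N:ℂ)^(m-j) * (N:ℂ)^j := by rw [← pow_add]; congr 1; omega
        rw [hm]
        field_simp
        rw [mul_assoc, ← mul_pow]; simp [hN0]
      refine Tendsto.congr' heq ?_
      have hinv : Tendsto (fun N : ℕ => ((N:ℂ))⁻¹) atTop (nhds 0) :=
        tendsto_inv_atTop_nhds_zero_nat (𝕜 := ℂ)
      have h2 := (hinv.pow (m-j)).const_mul (g.coeff j / g.coeff m)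
      rw [zero_pow (by omega : m - j ≠ 0), mul_zero] at h2
      exact h2
  have hsum : (∑ j ∈ Finset.range (m+1), if j = m then (1:ℂ) else 0) = 1 := by simp
  rw [hsum] at hmain
  refine hmain.congr fun N => ?_
  rw [hev N, Finset.sum_div]

theorem polyShift_iterate_monomial_geom (P : Polynomial ℂ) (d : ℕ) (lam : ℂ)
    (hlam : ‖lam‖ < 1)
    (hne : lam * P.eval lam * P.derivative.eval lam ≠ 0) :
    ∃ A : ℕ → ℕ → ℂ,
      (∀ N : ℕ, ∀ k : ℕ,
        (polyShift P)^[N] (fun k => (k : ℂ) ^ d * lam ^ k) k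
          = ∑ s ∈ Finset.range (d + 1),
              (P.eval lam) ^ ((N : ℤ) + s - d) * A N s * ((k : ℂ) ^ s * lam ^ k)) ∧
      (∀ N : ℕ, A N d = 1) ∧
      (1 ≤ d → ∀ N : ℕ, A N (d - 1) = (N : ℂ) * d * lam * P.derivative.eval lam) ∧
      (∀ s : ℕ, s ≤ d → ∃ ω : ℂ, ω ≠ 0 ∧
        Tendsto (fun N : ℕ => A N s / (ω * (N : ℂ) ^ (d - s))) atTop (nhds 1)) := by
  have hlam0 : lam ≠ 0 := fun h => hne (by rw [h]; ring)
  have hP : P.eval lam ≠ 0 := fun h => hne (by rw [h]; ring)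
  have hP' : P.derivative.eval lam ≠ 0 := fun h => hne (by rw [h]; ring)
  have h0 : phiP P lam 0 ≠ 0 := by rw [phiP_zero]; exact hP
  have h0' : phiP P lam 0 = P.eval lam := phiP_zero P lam
  have h1' : phiP P lam 1 = lam * P.derivative.eval lam := phiP_one P lam
  have h1 : phiP P lam 1 ≠ 0 := by rw [h1']; exact mul_ne_zero hlam0 hP'
  have hw1 : phiP P lam 1 / phiP P lam 0 ≠ 0 := div_ne_zero h1 h0
  refine ⟨fun N s => (d.choose s : ℂ) * fseq (phiP P lam) N (d - s) *
      (P.eval lam) ^ ((d:ℤ) - s - N), ?_, ?_, ?_, ?_⟩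
  · intro N k
    rw [iterate_expansion]
    symm
    apply Finset.sum_congr rfl
    intro s hs
    beta_reduce
    have hz : (P.eval lam) ^ ((N:ℤ) + s - d) * (P.eval lam) ^ ((d:ℤ) - s - N) = 1 := by
      rw [← zpow_add₀ hP]
      have he : (N:ℤ) + s - d + ((d:ℤ) - s - N) = 0 := by ring
      rw [he, zpow_zero]
    calc (P.eval lam) ^ ((N:ℤ) + s - d) *
          ((d.choose s : ℂ) * fseq (phiP P lam) N (d - s) * (P.eval lam) ^ ((d:ℤ) - s - N)) *
          ((k:ℂ) ^ s * lam ^ k)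
        = (d.choose s : ℂ) * fseq (phiP P lam) N (d - s) * ((k:ℂ) ^ s * lam ^ k) *
            ((P.eval lam) ^ ((N:ℤ) + s - d) * (P.eval lam) ^ ((d:ℤ) - s - N)) := by ring
      _ = (d.choose s : ℂ) * fseq (phiP P lam) N (d - s) * ((k:ℂ) ^ s * lam ^ k) := by
          rw [hz, mul_one]
  · intro N
    beta_reduce
    rw [Nat.sub_self, fseq_zero, Nat.choose_self, h0']
    have he : (d:ℤ) - d - N = -(N:ℤ) := by ring
    rw [he, ← zpow_natCast (P.eval lam) N, Nat.cast_one, one_mul, ← zpow_add₀ hP]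
    simp
  · intro hd N
    beta_reduce
    have hds : d - (d - 1) = 1 := by omega
    rw [hds, fseq_one _ h0 N, h0', h1']
    have hch : d.choose (d-1) = d := by rw [Nat.choose_symm hd, Nat.choose_one_right]
    rw [hch]
    have hcast : ((d:ℤ) - ((d-1:ℕ):ℤ) - N) = 1 - N := by
      rw [Nat.cast_sub hd]; push_cast; ring
    rw [hcast, zpow_sub₀ hP, zpow_one, ← zpow_natCast (P.eval lam) N]
    field_simp
  · intro s hs
    have hGd := Gm_deg (fun j => phiP P lam j / phiP P lam 0) hw1 (d - s)
    have hkey : ∀ N : ℕ, (d.choose s : ℂ) * fseq (phiP P lam) N (d - s) *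
          (P.eval lam) ^ ((d:ℤ) - s - N)
        = ((d.choose s : ℂ) * (P.eval lam) ^ (d - s)) *
            (Gm (fun j => phiP P lam j / phiP P lam 0) (d - s)).eval (N:ℂ) := by
      intro N
      rw [fseq_eq _ h0]
      have hcast : ((d:ℤ) - s - N) = ((d - s : ℕ):ℤ) - N := by omega
      rw [hcast, show (phiP P lam 0) ^ N = (P.eval lam) ^ N from by rw [h0']]
      have hz : (P.eval lam) ^ (N:ℕ) * (P.eval lam) ^ (((d - s : ℕ):ℤ) - N)
          = (P.eval lam) ^ (d - s) := by
        rw [← zpow_natCast (P.eval lam) N, ← zpow_add₀ hP]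
        have he : (N:ℤ) + (((d - s : ℕ):ℤ) - N) = ((d - s : ℕ):ℤ) := by ring
        rw [he, zpow_natCast]
      calc (d.choose s : ℂ) * ((P.eval lam) ^ N *
              (Gm (fun j => phiP P lam j / phiP P lam 0) (d - s)).eval (N:ℂ)) *
            (P.eval lam) ^ (((d - s : ℕ):ℤ) - N)
          = (d.choose s : ℂ) *
              (Gm (fun j => phiP P lam j / phiP P lam 0) (d - s)).eval (N:ℂ) *
              ((P.eval lam) ^ (N:ℕ) * (P.eval lam) ^ (((d - s : ℕ):ℤ) - N)) := by ring
        _ = (d.choose s : ℂ) * (P.eval lam) ^ (d - s) *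
              (Gm (fun j => phiP P lam j / phiP P lam 0) (d - s)).eval (N:ℂ) := by
            rw [hz]; ring
    have hC : (d.choose s : ℂ) * (P.eval lam) ^ (d - s) ≠ 0 :=
      mul_ne_zero (Nat.cast_ne_zero.mpr (Nat.choose_pos hs).ne') (pow_ne_zero _ hP)
    refine ⟨(d.choose s : ℂ) * (P.eval lam) ^ (d - s) *
        (phiP P lam 1 / phiP P lam 0) ^ (d - s), mul_ne_zero hC (pow_ne_zero _ hw1), ?_⟩
    have hG := tendsto_eval_div (Gm (fun j => phiP P lam j / phiP P lam 0) (d - s)) (d - s)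
      hGd.1 (by rw [hGd.2]; exact pow_ne_zero _ hw1)
    rw [hGd.2] at hG
    refine hG.congr fun N => ?_
    beta_reduce
    rw [hkey N]
    have hden : (d.choose s : ℂ) * (P.eval lam) ^ (d - s) *
          (phiP P lam 1 / phiP P lam 0) ^ (d - s) * (N:ℂ) ^ (d - s)
        = ((d.choose s : ℂ) * (P.eval lam) ^ (d - s)) *
            ((phiP P lam 1 / phiP P lam 0) ^ (d - s) * (N:ℂ) ^ (d - s)) := by ring
    rw [hden, mul_div_mul_left _ _ hC]
end

section
/- Let Λ ⊂ 𝔻 be a subset of the open unit disk with an accumulation point inside 𝔻. Then the linear span of the geometric sequences {(λᵏ)ₖ : λ ∈ Λ} is dense in ℓ¹(ℕ). -/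
/-!
By Hahn–Banach it suffices to show that a continuous functional `φ` on `ℓ¹` killing every
geometric sequence `(λᵏ)ₖ`, `λ ∈ Λ`, is zero. Such a `φ` is given by the bounded coefficients
`aₖ = φ(eₖ)`, and `φ((λᵏ)ₖ) = ∑ aₖ λᵏ` is a power series, holomorphic on the unit disk, that
vanishes on `Λ`. Since `Λ` accumulates inside the disk, the identity theorem makes it vanish
identically, so every `aₖ` is zero and `φ = 0`.
-/

open Metric Topology

theorem Submodule.dense_of_forall_dual_eq_zero {𝕜 E : Type*} [RCLike 𝕜] [NormedAddCommGroup E]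
    [NormedSpace 𝕜 E] (p : Submodule 𝕜 E)
    (h : ∀ φ : StrongDual 𝕜 E, (∀ x ∈ p, φ x = 0) → φ = 0) : Dense (p : Set E) := by
  rw [Submodule.dense_iff_topologicalClosure_eq_top, Submodule.eq_top_iff']
  by_contra! ⟨x, hx⟩
  set q := p.topologicalClosure
  have : IsClosed (q : Set E) := p.isClosed_topologicalClosure
  have hxq : ‖q.mkQ x‖ ≠ 0 := by simpa [Submodule.Quotient.mk_eq_zero] using hx
  obtain ⟨g, -, hgx⟩ := exists_dual_vector 𝕜 (q.mkQ x) hxq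
  have hg : g.comp q.mkQL = 0 := h _ fun y hy => by
    simp [(Submodule.Quotient.mk_eq_zero q).2 (p.le_topologicalClosure hy)]
  have hgx_zero : g (q.mkQ x) = 0 := by simpa using congrArg (· x) hg
  exact hxq (by exact_mod_cast hgx.symm.trans hgx_zero)

namespace lp

variable {𝕜 ι : Type*} [NontriviallyNormedField 𝕜] [DecidableEq ι]

noncomputable def dualCoeff (φ : StrongDual 𝕜 (lp (fun _ : ι => 𝕜) 1)) (i : ι) : 𝕜 :=
  φ (lp.single 1 i 1)

variable (φ : StrongDual 𝕜 (lp (fun _ : ι => 𝕜) 1))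

theorem norm_dualCoeff_le (i : ι) : ‖dualCoeff φ i‖ ≤ ‖φ‖ := by
  simpa [dualCoeff, lp.norm_single] using φ.le_opNorm (lp.single 1 i 1)

theorem hasSum_dualCoeff_mul (f : lp (fun _ : ι => 𝕜) 1) :
    HasSum (fun i => dualCoeff φ i * f i) (φ f) := by
  refine (φ.hasSum (lp.hasSum_single ENNReal.one_ne_top f)).congr_fun fun i => ?_
  rw [dualCoeff, mul_comm, ← smul_eq_mul, ← map_smul, ← lp.single_smul, smul_eq_mul, mul_one]

theorem eq_zero_of_dualCoeff_eq_zero (h : dualCoeff φ = 0) : φ = 0 :=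
  ContinuousLinearMap.ext fun f => by
    have hφf := hasSum_dualCoeff_mul φ f
    simp only [h, Pi.zero_apply, zero_mul] at hφf
    exact hφf.unique hasSum_zero

end lp

theorem memℓp_one_geometric {𝕜 : Type*} [NormedField 𝕜] {l : 𝕜} (hl : ‖l‖ < 1) :
    Memℓp (fun k : ℕ => l ^ k) 1 :=
  memℓp_gen <| by
    simpa only [ENNReal.toReal_one, Real.rpow_one, norm_pow] using
      summable_geometric_of_lt_one (norm_nonneg l) hl

namespace FormalMultilinearSeries

variable {𝕜 : Type*} [RCLike 𝕜] {a : ℕ → 𝕜}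

theorem one_le_radius_ofScalars_of_bounded {C : ℝ} (ha : ∀ k, ‖a k‖ ≤ C) :
    1 ≤ (ofScalars 𝕜 a).radius := by
  refine ENNReal.le_of_forall_nnreal_lt fun r hr => le_radius_of_bound _ C fun n => ?_
  rw [ofScalars_norm]
  have hr1 : (r : ℝ) ^ n ≤ 1 := pow_le_one₀ r.coe_nonneg (by exact_mod_cast hr.le)
  exact (mul_le_of_le_one_right (norm_nonneg _) hr1).trans (ha n)

theorem eq_zero_of_frequently_tsum_mul_pow_eq_zero {C : ℝ} (ha : ∀ k, ‖a k‖ ≤ C)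
    {z : 𝕜} (hz : z ∈ ball (0 : 𝕜) 1)
    (hzero : ∃ᶠ w in 𝓝[≠] z, ∑' k, a k * w ^ k = 0) : a = 0 := by
  set p := ofScalars 𝕜 a
  have hrad := one_le_radius_ofScalars_of_bounded ha
  have hanalytic : AnalyticOnNhd 𝕜 p.sum (ball 0 1) := by
    refine p.analyticOnNhd.mono ?_
    rw [← NNReal.coe_one, ← eball_coe, ENNReal.coe_one]
    exact eball_subset_eball hrad
  have hsum_eq : p.sum = fun w => ∑' k, a k * w ^ k := ofScalarsSum_eq_tsum a
  have hvanish : Set.EqOn p.sum 0 (ball 0 1) :=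
    hanalytic.eqOn_zero_of_preconnected_of_frequently_eq_zero
      (convex_ball 0 1).isPreconnected hz (by rwa [hsum_eq])
  have hp : p = 0 :=
    (p.hasFPowerSeriesOnBall (one_pos.trans_le hrad)).hasFPowerSeriesAt.eq_zero_of_eventually
      (Filter.mem_of_superset (ball_mem_nhds 0 one_pos) hvanish)
  exact (ofScalars_series_eq_zero (E := 𝕜)).1 hp

end FormalMultilinearSeries

theorem dense_span_geometric (Λ : Set ℂ) (hΛ : Λ ⊆ ball (0:ℂ) 1)
    (hacc : ∃ z ∈ ball (0:ℂ) 1, AccPt z (Filter.principal Λ)) :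
    Dense (↑(Submodule.span ℂ
      {f : lp (fun _ : ℕ => ℂ) 1 | ∃ l ∈ Λ, ∀ k : ℕ, f k = l ^ k}) : Set (lp (fun _ : ℕ => ℂ) 1)) := by
  refine Submodule.dense_of_forall_dual_eq_zero _ fun φ hφ =>
    lp.eq_zero_of_dualCoeff_eq_zero φ ?_
  obtain ⟨z, hz, hzacc⟩ := hacc
  refine FormalMultilinearSeries.eq_zero_of_frequently_tsum_mul_pow_eq_zero
    (lp.norm_dualCoeff_le φ) hz ((accPt_iff_frequently_nhdsNE.1 hzacc).mono fun l hl => ?_)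
  let g : lp (fun _ : ℕ => ℂ) 1 :=
    ⟨fun k => l ^ k, memℓp_one_geometric (mem_ball_zero_iff.1 (hΛ hl))⟩
  have hg : φ g = 0 := hφ g (Submodule.subset_span ⟨l, hl, fun _ => rfl⟩)
  exact (lp.hasSum_dualCoeff_mul φ g).tsum_eq.trans hg
end

section
/- Define ψ : ℝ → ℝ by ψ(t) = cos²(2t) + sinh²(t). Then there exists t₀ > 0 such that ψ is strictly decreasing on (0, t₀) and strictly increasing on (t₀, +∞); moreover there exists a unique t₁ > 0 with ψ(t₁) = 1, and ψ(t) > 1 for t > t₁. -/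
/-!
ψ(t) = cos²(2t) + sinh²t has derivative ψ'(t) = F(2t) with F(u) = sinh u − 2 sin 2u.
On (0, π) one has F(u) = sin u · (sinh u / sin u − 4 cos u), and the bracket is strictly
increasing there (sinh / sin increases since cosh u sin u − sinh u cos u > 0, and cos decreases);
it is negative at 1/2 and positive at π/2, while F > 0 on [π, ∞) because sinh u > u ≥ π > 2.
So F changes sign exactly once, at some u₀, and ψ decreases on [0, u₀/2] and increases
afterwards. Since ψ(0) = 1 and ψ → ∞, the level 1 is taken exactly once on (0, ∞).
-/

open Real Set Filter

lemma cosh_mul_sin_sub_sinh_mul_cos_pos {u : ℝ} (h0 : 0 < u) (hu : u ≤ π) :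
    0 < cosh u * sin u - sinh u * cos u := by
  have hmono : StrictMonoOn (fun v => cosh v * sin v - sinh v * cos v) (Icc 0 π) := by
    refine strictMonoOn_of_deriv_pos (convex_Icc _ _) (by fun_prop) fun x hx => ?_
    rw [interior_Icc] at hx
    have hd : HasDerivAt (fun v => cosh v * sin v - sinh v * cos v) (2 * sinh x * sin x) x :=
      (((hasDerivAt_cosh x).mul (hasDerivAt_sin x)).sub
        ((hasDerivAt_sinh x).mul (hasDerivAt_cos x))).congr_deriv (by ring)
    have hsinh : 0 < sinh x := sinh_pos_iff.2 hx.1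
    have hsin : 0 < sin x := sin_pos_of_pos_of_lt_pi hx.1 hx.2
    rw [hd.deriv]
    positivity
  simpa using hmono (left_mem_Icc.2 pi_pos.le) ⟨h0.le, hu⟩ h0

lemma strictMonoOn_sinh_div_sin : StrictMonoOn (fun u => sinh u / sin u) (Ioo 0 π) := by
  refine strictMonoOn_of_deriv_pos (convex_Ioo _ _) ?_ fun x hx => ?_
  · exact continuous_sinh.continuousOn.div continuous_sin.continuousOn
      fun x hx => (sin_pos_of_pos_of_lt_pi hx.1 hx.2).ne'
  · rw [interior_Ioo] at hx
    have hsin : 0 < sin x := sin_pos_of_pos_of_lt_pi hx.1 hx.2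
    have hd : HasDerivAt (fun u => sinh u / sin u)
        ((cosh x * sin x - sinh x * cos x) / sin x ^ 2) x :=
      (hasDerivAt_sinh x).div (hasDerivAt_sin x) hsin.ne'
    rw [hd.deriv]
    exact div_pos (cosh_mul_sin_sub_sinh_mul_cos_pos hx.1 hx.2.le) (by positivity)

lemma strictMonoOn_sinh_div_sin_sub_four_mul_cos :
    StrictMonoOn (fun u => sinh u / sin u - 4 * cos u) (Ioo 0 π) := fun a ha b hb hab => by
  have hcos : cos b < cos a := strictAntiOn_cos (Ioo_subset_Icc_self ha) (Ioo_subset_Icc_self hb) hab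
  have hdiv := strictMonoOn_sinh_div_sin ha hb hab
  dsimp only at hdiv ⊢
  linarith

lemma sinh_sub_two_sin_two_mul_eq {u : ℝ} (hu : sin u ≠ 0) :
    sinh u - 2 * sin (2 * u) = sin u * (sinh u / sin u - 4 * cos u) := by
  rw [sin_two_mul]
  field_simp
  ring

lemma sinh_half_lt_two_sin_one : sinh (1 / 2) < 2 * sin 1 := by
  have hsin : 1 - 1 ^ 3 / 6 < sin 1 := sin_gt_sub_cube one_pos
  have hexp : exp (1 / 2) ≤ exp 1 := exp_le_exp.2 (by norm_num)
  have := exp_one_lt_d9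
  have := exp_pos (-(1 / 2))
  rw [sinh_eq]
  linarith

lemma exists_sinh_div_sin_sub_four_mul_cos_eq_zero :
    ∃ u₀ ∈ Ioo 0 π, sinh u₀ / sin u₀ - 4 * cos u₀ = 0 := by
  have hpi := pi_gt_three
  have hneg : sinh (1 / 2) / sin (1 / 2) - 4 * cos (1 / 2) < 0 := by
    have hsin : 0 < sin (1 / 2) := sin_pos_of_pos_of_lt_pi (by norm_num) (by linarith)
    have hF : sinh (1 / 2) - 2 * sin (2 * (1 / 2)) < 0 := by
      norm_num only
      exact sub_neg.2 sinh_half_lt_two_sin_one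
    rw [sinh_sub_two_sin_two_mul_eq hsin.ne'] at hF
    exact neg_of_mul_neg_right hF hsin.le
  have hpos : 0 < sinh (π / 2) / sin (π / 2) - 4 * cos (π / 2) := by
    simpa using sinh_pos_iff.2 (by positivity : 0 < π / 2)
  have hcont : ContinuousOn (fun u => sinh u / sin u - 4 * cos u) (Icc (1 / 2) (π / 2)) :=
    (continuous_sinh.continuousOn.div continuous_sin.continuousOn fun x hx =>
      (sin_pos_of_pos_of_lt_pi (by linarith [hx.1]) (by linarith [hx.2])).ne').sub (by fun_prop)
  obtain ⟨u₀, hu₀, hroot⟩ := intermediate_value_Ioo (by linarith) hcont ⟨hneg, hpos⟩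
  exact ⟨u₀, ⟨by linarith [hu₀.1], by linarith [hu₀.2]⟩, hroot⟩

lemma exists_sinh_sub_two_sin_two_mul_sign_change :
    ∃ u₀ > 0, (∀ u ∈ Ioo 0 u₀, sinh u < 2 * sin (2 * u)) ∧
      ∀ u > u₀, 2 * sin (2 * u) < sinh u := by
  obtain ⟨u₀, hu₀, hroot⟩ := exists_sinh_div_sin_sub_four_mul_cos_eq_zero
  refine ⟨u₀, hu₀.1, fun u hu => ?_, fun u hu => ?_⟩
  · have hu' : u ∈ Ioo 0 π := ⟨hu.1, hu.2.trans hu₀.2⟩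
    have hsin : 0 < sin u := sin_pos_of_pos_of_lt_pi hu'.1 hu'.2
    have hp := strictMonoOn_sinh_div_sin_sub_four_mul_cos hu' hu₀ hu.2
    rw [← sub_neg, sinh_sub_two_sin_two_mul_eq hsin.ne']
    exact mul_neg_of_pos_of_neg hsin (hroot ▸ hp)
  rcases lt_or_ge u π with hπ | hπ
  · have hu' : u ∈ Ioo 0 π := ⟨hu₀.1.trans hu, hπ⟩
    have hsin : 0 < sin u := sin_pos_of_pos_of_lt_pi hu'.1 hu'.2
    have hp := strictMonoOn_sinh_div_sin_sub_four_mul_cos hu₀ hu' hu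
    rw [← sub_pos, sinh_sub_two_sin_two_mul_eq hsin.ne']
    exact mul_pos hsin (hroot ▸ hp)
  · have := sin_le_one (2 * u)
    have := self_lt_sinh_iff.2 (pi_pos.trans_le hπ)
    linarith [pi_gt_three]

section LevelSet

variable {f : ℝ → ℝ} {t₀ s : ℝ}

lemma lt_of_apply_eq_apply_zero (hanti : StrictAntiOn f (Icc 0 t₀)) (hs : 0 < s)
    (hfs : f s = f 0) : t₀ < s := by
  by_contra! hst
  exact (hanti (left_mem_Icc.2 (hs.le.trans hst)) ⟨hs.le, hst⟩ hs).ne hfs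

lemma apply_zero_lt_of_lt (hanti : StrictAntiOn f (Icc 0 t₀)) (hmono : StrictMonoOn f (Ici t₀))
    (hs : 0 < s) (hfs : f s = f 0) {t : ℝ} (hst : s < t) : f 0 < f t := by
  have hs₀ := lt_of_apply_eq_apply_zero hanti hs hfs
  exact hfs ▸ hmono (mem_Ici.2 hs₀.le) (mem_Ici.2 (hs₀.trans hst).le) hst

lemma existsUnique_pos_apply_eq_apply_zero (ht₀ : 0 < t₀) (hanti : StrictAntiOn f (Icc 0 t₀))
    (hmono : StrictMonoOn f (Ici t₀)) (hcont : ContinuousOn f (Ici t₀))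
    (htop : Tendsto f atTop atTop) : ∃! t₁, 0 < t₁ ∧ f t₁ = f 0 := by
  obtain ⟨T, hfT, hT⟩ := ((htop.eventually_gt_atTop (f 0)).and (eventually_ge_atTop t₀)).exists
  have hft₀ : f t₀ < f 0 := hanti (left_mem_Icc.2 ht₀.le) (right_mem_Icc.2 ht₀.le) ht₀
  obtain ⟨t₁, ht₁, hft₁⟩ :=
    intermediate_value_Icc hT (hcont.mono Icc_subset_Ici_self) ⟨hft₀.le, hfT.le⟩
  refine ⟨t₁, ⟨ht₀.trans_le ht₁.1, hft₁⟩, fun s ⟨hs, hfs⟩ => ?_⟩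
  exact hmono.injOn (mem_Ici.2 (lt_of_apply_eq_apply_zero hanti hs hfs).le)
    (mem_Ici.2 ht₁.1) (hfs.trans hft₁.symm)

end LevelSet

noncomputable def psi (t : ℝ) : ℝ := cos (2 * t) ^ 2 + sinh t ^ 2

lemma psi_zero : psi 0 = 1 := by simp [psi]

lemma continuous_psi : Continuous psi := by unfold psi; fun_prop

lemma hasDerivAt_psi (t : ℝ) : HasDerivAt psi (sinh (2 * t) - 2 * sin (2 * (2 * t))) t := by
  have h2t : HasDerivAt (fun t : ℝ => 2 * t) 2 t := by
    simpa using (hasDerivAt_id t).const_mul (2 : ℝ)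
  refine ((((hasDerivAt_cos (2 * t)).comp t h2t).pow 2).add
    ((hasDerivAt_sinh t).pow 2)).congr_deriv ?_
  rw [sinh_two_mul, sin_two_mul (2 * t)]
  norm_num
  ring

lemma tendsto_psi_atTop : Tendsto psi atTop atTop := by
  refine tendsto_atTop_mono' atTop ((eventually_ge_atTop 1).mono fun t ht => ?_) tendsto_id
  have hsinh : t ≤ sinh t := self_le_sinh_iff.2 (by linarith)
  have := sq_nonneg (cos (2 * t))
  simp only [id, psi]
  nlinarith

lemma exists_pos_strictAntiOn_strictMonoOn_psi :
    ∃ t₀ > 0, StrictAntiOn psi (Icc 0 t₀) ∧ StrictMonoOn psi (Ici t₀) := by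
  obtain ⟨u₀, hu₀, hneg, hpos⟩ := exists_sinh_sub_two_sin_two_mul_sign_change
  refine ⟨u₀ / 2, by positivity, ?_, ?_⟩
  · refine strictAntiOn_of_deriv_neg (convex_Icc _ _) continuous_psi.continuousOn fun t ht => ?_
    rw [interior_Icc] at ht
    rw [(hasDerivAt_psi t).deriv, sub_neg]
    exact hneg (2 * t) ⟨by linarith [ht.1], by linarith [ht.2]⟩
  · refine strictMonoOn_of_deriv_pos (convex_Ici _) continuous_psi.continuousOn fun t ht => ?_
    rw [interior_Ici] at ht
    rw [(hasDerivAt_psi t).deriv, sub_pos]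
    exact hpos (2 * t) (by linarith [mem_Ioi.1 ht])

theorem psi_monotonicity :
    ∃ t₀ > (0:ℝ),
      StrictAntiOn (fun t : ℝ => Real.cos (2 * t) ^ 2 + Real.sinh t ^ 2) (Ioo 0 t₀) ∧
      StrictMonoOn (fun t : ℝ => Real.cos (2 * t) ^ 2 + Real.sinh t ^ 2) (Ioi t₀) ∧
      (∃! t₁ : ℝ, 0 < t₁ ∧ Real.cos (2 * t₁) ^ 2 + Real.sinh t₁ ^ 2 = 1) ∧
      (∀ t₁ : ℝ, 0 < t₁ → Real.cos (2 * t₁) ^ 2 + Real.sinh t₁ ^ 2 = 1 →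
        ∀ t : ℝ, t₁ < t → 1 < Real.cos (2 * t) ^ 2 + Real.sinh t ^ 2) := by
  obtain ⟨t₀, ht₀, hanti, hmono⟩ := exists_pos_strictAntiOn_strictMonoOn_psi
  refine ⟨t₀, ht₀, hanti.mono Ioo_subset_Icc_self, hmono.mono Ioi_subset_Ici_self, ?_, ?_⟩
  · exact psi_zero ▸ existsUnique_pos_apply_eq_apply_zero ht₀ hanti hmono
      continuous_psi.continuousOn tendsto_psi_atTop
  · intro t₁ ht₁ hψt₁ t ht
    exact psi_zero ▸ apply_zero_lt_of_lt hanti hmono ht₁ (hψt₁.trans psi_zero.symm) ht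
end

section
/- Let φ(z) = 2e^{−z} + sin(z). For every m ≥ 1 there exist a, b ∈ ℂ (one can take a = kπ and b = kπ + π/(2m) for k large enough) such that |φ(mb)| > 1 and for all n ∈ {1,…,m} and d ∈ {0,…,n} with (n,d) ≠ (m,m), |φ(db + (n−d)a)| < 1. -/
/-!
Take `a = 2πN` and `b = a + t` with `t = π / (2m)`. All the points `db + (n - d)a` are then real,
equal to `dt` modulo `2π`, and at least `2πN`. For `(n, d) = (m, m)` the point is `π/2` modulo `2π`,
so `φ = 1 + 2e^{-x} > 1`. Otherwise `d < m`, so `0 ≤ sin(dt) ≤ sin(π/2 - t) = cos t < 1`, and for `N`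
large the term `2e^{-x} ≤ 2e^{-2πN}` fits into the gap `1 - cos t`.
-/

open Real Filter

noncomputable def phi (z : ℂ) : ℂ := 2 * Complex.exp (-z) + Complex.sin z

lemma norm_phi_ofReal (x : ℝ) : ‖phi x‖ = |2 * exp (-x) + sin x| := by
  have : phi x = ((2 * exp (-x) + sin x : ℝ) : ℂ) := by
    simp only [phi]
    push_cast
    rfl
  rw [this, Complex.norm_real, Real.norm_eq_abs]

lemma one_lt_norm_phi_pi_div_two_add_nat_mul_two_pi (k : ℕ) :
    1 < ‖phi (π / 2 + k * (2 * π) : ℝ)‖ := by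
  rw [norm_phi_ofReal, sin_add_nat_mul_two_pi, sin_pi_div_two]
  have := exp_pos (-(π / 2 + k * (2 * π)))
  rw [abs_of_pos (by linarith)]
  linarith

lemma Real.sin_le_cos_of_add_le_pi_div_two {s t : ℝ} (hs : 0 ≤ s) (ht : 0 ≤ t)
    (hst : s + t ≤ π / 2) : sin s ≤ cos t := by
  rw [← sin_pi_div_two_sub]
  exact sin_le_sin_of_le_of_le_pi_div_two (by linarith [pi_pos]) (by linarith) (by linarith)

lemma exists_nat_two_mul_exp_neg_lt {ε : ℝ} (hε : 0 < ε) :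
    ∃ N : ℕ, 2 * exp (-(N * (2 * π))) < ε := by
  have hlim : Tendsto (fun N : ℕ => 2 * exp (-(N * (2 * π)))) atTop (nhds (2 * 0)) :=
    (tendsto_exp_neg_atTop_nhds_zero.comp
      (tendsto_natCast_atTop_atTop.atTop_mul_const (by positivity))).const_mul 2
  rw [mul_zero] at hlim
  exact (hlim.eventually (gt_mem_nhds hε)).exists

lemma norm_phi_add_nat_mul_two_pi_lt_one {s t : ℝ} {N k : ℕ} (hs : 0 ≤ s) (ht : 0 ≤ t)
    (hst : s + t ≤ π / 2) (hN : 2 * exp (-(N * (2 * π))) < 1 - cos t) (hNk : N ≤ k) :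
    ‖phi (s + k * (2 * π) : ℝ)‖ < 1 := by
  rw [norm_phi_ofReal, sin_add_nat_mul_two_pi]
  have hsin_nonneg : 0 ≤ sin s := sin_nonneg_of_nonneg_of_le_pi hs (by linarith [pi_pos])
  have hsin_le : sin s ≤ cos t := sin_le_cos_of_add_le_pi_div_two hs ht hst
  have hexp_le : exp (-(s + k * (2 * π))) ≤ exp (-(N * (2 * π))) := by
    gcongr
    exact le_add_of_nonneg_of_le hs (by gcongr)
  have := exp_pos (-(s + k * (2 * π)))
  rw [abs_of_nonneg (by positivity)]
  linarith

theorem example_phi_large (m : ℕ) (hm : 1 ≤ m) :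
    ∃ a b : ℂ,
      1 < ‖2 * Complex.exp (-((m : ℂ) * b)) + Complex.sin ((m : ℂ) * b)‖ ∧
      ∀ n : ℕ, 1 ≤ n → n ≤ m → ∀ d : ℕ, d ≤ n → (n, d) ≠ (m, m) →
        ‖2 * Complex.exp (-((d : ℂ) * b + ((n : ℂ) - (d : ℂ)) * a))
          + Complex.sin ((d : ℂ) * b + ((n : ℂ) - (d : ℂ)) * a)‖ < 1 := by
  have hm_pos : (0 : ℝ) < m := by exact_mod_cast hm
  set t : ℝ := π / (2 * m) with ht_def
  have ht_pos : 0 < t := by positivity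
  have hmt : m * t = π / 2 := by rw [ht_def]; field_simp
  have hcos : cos t < 1 := by
    have := cos_lt_cos_of_nonneg_of_le_pi_div_two le_rfl
      (by rw [← hmt]; exact le_mul_of_one_le_left ht_pos.le (by exact_mod_cast hm)) ht_pos
    rwa [cos_zero] at this
  obtain ⟨N, hN⟩ := exists_nat_two_mul_exp_neg_lt (sub_pos.2 hcos)
  refine ⟨(N * (2 * π) : ℝ), (N * (2 * π) + t : ℝ), ?_, ?_⟩
  · change 1 < ‖phi _‖
    convert one_lt_norm_phi_pi_div_two_add_nat_mul_two_pi (m * N) using 3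
    push_cast
    linear_combination (by exact_mod_cast hmt : (m : ℂ) * t = π / 2)
  · intro n hn hnm d hdn hne
    change ‖phi _‖ < 1
    have hdm : d < m := by
      refine lt_of_le_of_ne (hdn.trans hnm) fun hd => hne ?_
      subst hd
      rw [le_antisymm hnm hdn]
    have hdt : d * t + t ≤ π / 2 := by
      rw [← hmt]
      have : (d : ℝ) + 1 ≤ m := by exact_mod_cast hdm
      nlinarith
    convert norm_phi_add_nat_mul_two_pi_lt_one (by positivity) ht_pos.le hdt hN
      (Nat.le_mul_of_pos_left N hn) using 3
    push_cast
    ring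
end

section
/- Let φ be an entire function with |φ(0)| < 1, and let M(r) = sup{|φ(z)| : |z| = r}. Suppose M(r₁) > 1 for some r₁. Then for every ρ ∈ (0,1) there exists w₀ ∈ ℂ with |φ(w₀)| > 1 and |φ(r·w₀)| < 1 for all r ∈ (0, ρ]. -/
/-!
Pick `z₁` with `|φ z₁| > 1` and let `t z₁` be the first point of the segment `[0, z₁]` where
`|φ| ≥ 1`. Every point `r t z₁` with `0 ≤ r ≤ ρ < 1` lies strictly before it, so by compactness of
`[0, ρ]` the same is true for all `w` near `t z₁`: `|φ (r w)| < 1`. On the other hand `t z₁` is a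
limit of points with `|φ| < 1` while `|φ (t z₁)| ≥ 1`, so by the maximum modulus principle it is
also a limit of points with `|φ| > 1`; any such point close enough to `t z₁` is the required `w₀`.
-/

open Metric Set Filter Topology

theorem exists_first_mem_of_isClosed {X : Type*} [TopologicalSpace X] {γ : ℝ → X} {a b : ℝ}
    (hγ : ContinuousOn γ (Icc a b)) {C : Set X} (hC : IsClosed C) (hab : a ≤ b)
    (ha : γ a ∉ C) (hb : γ b ∈ C) :
    ∃ t ∈ Ioc a b, γ t ∈ C ∧ ∀ s ∈ Ico a t, γ s ∉ C := by
  set S := Icc a b ∩ γ ⁻¹' C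
  have hS_closed : IsClosed S := hγ.preimage_isClosed_of_isClosed isClosed_Icc hC
  have hS_bdd : BddBelow S := ⟨a, fun s hs => hs.1.1⟩
  have htS : sInf S ∈ S := hS_closed.csInf_mem ⟨b, ⟨⟨hab, le_rfl⟩, hb⟩⟩ hS_bdd
  have hat : a ≠ sInf S := fun hat => ha (hat ▸ htS.2)
  refine ⟨sInf S, ⟨lt_of_le_of_ne htS.1.1 hat, htS.1.2⟩, htS.2, fun s hs hsC => ?_⟩
  exact (csInf_le hS_bdd ⟨⟨hs.1, hs.2.le.trans htS.1.2⟩, hsC⟩).not_gt hs.2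

theorem ContinuousWithinAt.frequently_of_forall_Ico {X : Type*} [TopologicalSpace X]
    {γ : ℝ → X} {a t : ℝ} (hγ : ContinuousWithinAt γ (Iio t) t) (hat : a < t) {p : X → Prop}
    (hp : ∀ s ∈ Ico a t, p (γ s)) : ∃ᶠ x in 𝓝 (γ t), p x := by
  refine hγ.tendsto.frequently (Eventually.frequently ?_)
  filter_upwards [Ioo_mem_nhdsLT hat] with s hs
  exact hp s ⟨hs.1.le, hs.2⟩

theorem IsCompact.eventually_forall_mem {X Y Z : Type*} [TopologicalSpace X] [TopologicalSpace Y]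
    [TopologicalSpace Z] {K : Set Y} (hK : IsCompact K) {f : X × Y → Z} (hf : Continuous f)
    {U : Set Z} (hU : IsOpen U) {x₀ : X} (h : ∀ y ∈ K, f (x₀, y) ∈ U) :
    ∀ᶠ x in 𝓝 x₀, ∀ y ∈ K, f (x, y) ∈ U :=
  hK.eventually_forall_of_forall_eventually fun y hy =>
    hf.continuousAt.preimage_mem_nhds (hU.mem_nhds (h y hy))

theorem Complex.frequently_lt_norm_of_frequently_norm_lt {F : Type*} [NormedAddCommGroup F]
    [NormedSpace ℂ F] {φ : ℂ → F} {c : ℂ} {a : ℝ} (hφ : ∀ᶠ z in 𝓝 c, DifferentiableAt ℂ φ z)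
    (ha : a ≤ ‖φ c‖) (hlt : ∃ᶠ z in 𝓝 c, ‖φ z‖ < a) : ∃ᶠ z in 𝓝 c, a < ‖φ z‖ := by
  intro hle
  have hmax : IsLocalMax (norm ∘ φ) c := hle.mono fun z hz => (not_lt.1 hz).trans ha
  obtain ⟨z, hz_lt, hz_eq⟩ :=
    (hlt.and_eventually (Complex.norm_eventually_eq_of_isLocalMax hφ hmax)).exists
  exact (hz_eq ▸ hz_lt).not_ge ha

theorem small_eigen_direction (φ : ℂ → ℂ) (hφ : Differentiable ℂ φ)
    (h0 : ‖φ 0‖ < 1)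
    (hM : ∃ r₁ : ℝ, 1 < sSup ((fun z => ‖φ z‖) '' sphere (0:ℂ) r₁)) :
    ∀ ρ : ℝ, 0 < ρ → ρ < 1 →
      ∃ w₀ : ℂ, 1 < ‖φ w₀‖ ∧
        ∀ r : ℝ, 0 < r → r ≤ ρ → ‖φ ((r : ℂ) * w₀)‖ < 1 := by
  intro ρ _ hρ1
  obtain ⟨r₁, hr₁⟩ := hM
  obtain ⟨_, ⟨z₁, -, rfl⟩, hz₁⟩ : ∃ x ∈ (fun z => ‖φ z‖) '' sphere (0:ℂ) r₁, 1 < x := by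
    by_contra! h
    exact hr₁.not_ge (Real.sSup_le h zero_le_one)
  have hφc : Continuous φ := hφ.continuous
  set γ : ℝ → ℂ := fun s => s * z₁
  have hγ : Continuous γ := by fun_prop
  obtain ⟨t, ⟨ht0, -⟩, htC, hbefore⟩ := exists_first_mem_of_isClosed (C := {z | 1 ≤ ‖φ z‖})
    hγ.continuousOn (isClosed_le continuous_const (by fun_prop)) zero_le_one
    (by simpa [γ] using h0) (by simpa [γ] using hz₁.le)
  have hlt : ∃ᶠ z in 𝓝 (γ t), ‖φ z‖ < 1 :=
    hγ.continuousWithinAt.frequently_of_forall_Ico ht0 fun s hs => not_le.1 (hbefore s hs)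
  have hsmall : ∀ᶠ w in 𝓝 (γ t), ∀ r ∈ Icc 0 ρ, ‖φ (r * w)‖ ∈ Iio 1 := by
    refine isCompact_Icc.eventually_forall_mem (f := fun p : ℂ × ℝ => ‖φ (p.2 * p.1)‖)
      (by fun_prop) isOpen_Iio fun r hr => ?_
    have hrt : r * t ∈ Ico 0 t := ⟨by nlinarith [hr.1], by nlinarith [hr.2]⟩
    simpa [γ, mul_assoc] using hbefore _ hrt
  obtain ⟨w₀, hw₀, hw₀_small⟩ := (Complex.frequently_lt_norm_of_frequently_norm_lt
    (Eventually.of_forall fun z => hφ z) htC hlt |>.and_eventually hsmall).exists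
  exact ⟨w₀, hw₀, fun r hr hrρ => hw₀_small r ⟨hr.le, hrρ⟩⟩
end

section
/- Let ψ : [t₀, ∞) → ℝ be continuous with ψ(t₀) > 1, and suppose there exist sequences (tₙ) and (rₙ) with tₙ = rₙ·t_{n−1}, rₙ ∈ (1, m], and ψ(tₙ) ≥ max(ψ(t_{n−1})^{(1−εₙ)rₙ}, ψ(t_{n−1})^{3/2}) for all n ≥ 1, where (εₙ) ⊂ (0,1) satisfies κ := Π_{n≥1}(1−εₙ) > 0. Then ψ(tₙ) ≥ ψ(t₀)^{κ·tₙ/t₀} for all n, and tₙ → ∞; in particular ψ does not have subexponential growth along (tₙ), i.e., log ψ(tₙ)/tₙ ≥ κ·log ψ(t₀)/t₀ > 0 for all n. -/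
open Filter

theorem growth_along_sequence (ψ : ℝ → ℝ) (t₀ : ℝ) (ht₀ : 0 < t₀)
    (hcont : ContinuousOn ψ (Set.Ici t₀)) (hψt₀ : 1 < ψ t₀)
    (m : ℝ) (t r ε : ℕ → ℝ) (κ : ℝ) (hκ : 0 < κ)
    (hprod : HasProd (fun n : ℕ => 1 - ε (n + 1)) κ)
    (ht0 : t 0 = t₀)
    (hε : ∀ n : ℕ, 1 ≤ n → 0 < ε n ∧ ε n < 1)
    (hr : ∀ n : ℕ, 1 ≤ n → 1 < r n ∧ r n ≤ m)
    (htr : ∀ n : ℕ, 1 ≤ n → t n = r n * t (n - 1))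
    (hgrow : ∀ n : ℕ, 1 ≤ n →
      max ((ψ (t (n - 1))) ^ ((1 - ε n) * r n)) ((ψ (t (n - 1))) ^ ((3:ℝ)/2)) ≤ ψ (t n)) :
    (∀ n : ℕ, ψ t₀ ^ (κ * t n / t₀) ≤ ψ (t n)) ∧
    Tendsto t atTop atTop ∧
    (∀ n : ℕ, κ * Real.log (ψ t₀) / t₀ ≤ Real.log (ψ (t n)) / t n) ∧
    0 < κ * Real.log (ψ t₀) / t₀ := by
  have hb0 : (0:ℝ) < ψ t₀ := lt_trans one_pos hψt₀
  have hεpos : ∀ k : ℕ, 0 < 1 - ε (k + 1) := fun k => by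
    have := (hε (k + 1) (by omega)).2; linarith
  have hεle : ∀ k : ℕ, 1 - ε (k + 1) ≤ 1 := fun k => by
    have := (hε (k + 1) (by omega)).1; linarith
  -- partial products of (1-ε) are ≥ κ
  have hPκ : ∀ n : ℕ, κ ≤ ∏ k ∈ Finset.range n, (1 - ε (k + 1)) := by
    intro n
    refine le_of_tendsto hprod ?_
    filter_upwards [Filter.eventually_ge_atTop (Finset.range n)] with s hs
    have := Finset.prod_sdiff (f := fun k => 1 - ε (k + 1)) hs
    calc ∏ i ∈ s, (1 - ε (i + 1))
        = (∏ i ∈ s \ Finset.range n, (1 - ε (i + 1))) *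
            ∏ i ∈ Finset.range n, (1 - ε (i + 1)) := this.symm
      _ ≤ 1 * ∏ i ∈ Finset.range n, (1 - ε (i + 1)) := by
          apply mul_le_mul_of_nonneg_right
          · exact Finset.prod_le_one (fun i _ => (hεpos i).le) (fun i _ => hεle i)
          · exact Finset.prod_nonneg fun i _ => (hεpos i).le
      _ = _ := one_mul _
  have hPpos : ∀ n : ℕ, 0 < ∏ k ∈ Finset.range n, (1 - ε (k + 1)) :=
    fun n => Finset.prod_pos fun i _ => hεpos i
  have hQpos : ∀ n : ℕ, 0 < ∏ k ∈ Finset.range n, r (k + 1) :=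
    fun n => Finset.prod_pos fun i _ => lt_trans one_pos (hr (i + 1) (by omega)).1
  have hQ1 : ∀ n : ℕ, 1 ≤ ∏ k ∈ Finset.range n, r (k + 1) := fun n => by
    have := Finset.prod_le_prod (s := Finset.range n) (f := fun _ => (1:ℝ))
      (g := fun k => r (k + 1)) (fun i _ => by norm_num)
      (fun i _ => (hr (i + 1) (by omega)).1.le)
    simpa using this
  -- t n = t₀ * ∏ r
  have htQ : ∀ n : ℕ, t n = t₀ * ∏ k ∈ Finset.range n, r (k + 1) := by
    intro n
    induction n with
    | zero => simp [ht0]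
    | succ n ih =>
      rw [Finset.prod_range_succ, htr (n + 1) (by omega)]
      simp only [Nat.add_sub_cancel, ih]; ring
  have htpos : ∀ n : ℕ, 0 < t n := fun n => by
    rw [htQ n]; exact mul_pos ht₀ (hQpos n)
  -- main induction: ψ (t n) ≥ ψ t₀ ^ (P n * Q n)
  have hmain : ∀ n : ℕ, ψ t₀ ^ ((∏ k ∈ Finset.range n, (1 - ε (k + 1))) *
      ∏ k ∈ Finset.range n, r (k + 1)) ≤ ψ (t n) := by
    intro n
    induction n with
    | zero => simp [ht0]
    | succ n ih =>
      have h1 : (0:ℝ) ≤ (1 - ε (n + 1)) * r (n + 1) :=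
        mul_nonneg (hεpos n).le (lt_trans one_pos (hr (n + 1) (by omega)).1).le
      have h2 : ψ t₀ ^ ((∏ k ∈ Finset.range n, (1 - ε (k + 1))) *
          (∏ k ∈ Finset.range n, r (k + 1)) * ((1 - ε (n + 1)) * r (n + 1)))
          ≤ ψ (t n) ^ ((1 - ε (n + 1)) * r (n + 1)) := by
        rw [Real.rpow_mul hb0.le]
        exact Real.rpow_le_rpow (Real.rpow_nonneg hb0.le _) ih h1
      have h3 := le_trans (le_max_left _ _) (hgrow (n + 1) (by omega))
      simp only [Nat.add_sub_cancel] at h3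
      refine le_trans (le_of_eq ?_) (le_trans h2 h3)
      rw [Finset.prod_range_succ, Finset.prod_range_succ]
      congr 1
      ring
  -- second induction: ψ (t n) ≥ ψ t₀ ^ ((3/2)^n)
  have haux : ∀ n : ℕ, ψ t₀ ^ (((3:ℝ)/2) ^ n) ≤ ψ (t n) := by
    intro n
    induction n with
    | zero => simp [ht0]
    | succ n ih =>
      have h2 : ψ t₀ ^ (((3:ℝ)/2) ^ n * ((3:ℝ)/2)) ≤ ψ (t n) ^ ((3:ℝ)/2) := by
        rw [Real.rpow_mul hb0.le]
        exact Real.rpow_le_rpow (Real.rpow_nonneg hb0.le _) ih (by norm_num)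
      have h3 := le_trans (le_max_right _ _) (hgrow (n + 1) (by omega))
      simp only [Nat.add_sub_cancel] at h3
      calc ψ t₀ ^ (((3:ℝ)/2) ^ (n + 1)) = ψ t₀ ^ (((3:ℝ)/2) ^ n * ((3:ℝ)/2)) := by
            rw [pow_succ]
        _ ≤ ψ (t n) ^ ((3:ℝ)/2) := h2
        _ ≤ ψ (t (n + 1)) := h3
  -- first conclusion
  have hconc1 : ∀ n : ℕ, ψ t₀ ^ (κ * t n / t₀) ≤ ψ (t n) := by
    intro n
    refine le_trans ?_ (hmain n)
    apply Real.rpow_le_rpow_of_exponent_le hψt₀.le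
    have : κ * t n / t₀ = κ * ∏ k ∈ Finset.range n, r (k + 1) := by
      rw [htQ n]; field_simp
    rw [this]
    exact mul_le_mul_of_nonneg_right (hPκ n) (hQpos n).le
  -- monotonicity of t
  have htmono : Monotone t := by
    apply monotone_nat_of_le_succ
    intro n
    have := htr (n + 1) (by omega)
    simp only [Nat.add_sub_cancel] at this
    rw [this]
    nlinarith [(hr (n + 1) (by omega)).1, htpos n]
  -- t tends to atTop
  have htop : Tendsto t atTop atTop := by
    rcases tendsto_of_monotone htmono with h | ⟨l, hl⟩
    · exact h
    · exfalso
      have hmem : ∀ n, t n ∈ Set.Ici t₀ := fun n => by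
        have := htmono (Nat.zero_le n); rw [ht0] at this; exact this
      have hlmem : l ∈ Set.Ici t₀ := by
        have := ge_of_tendsto hl (Filter.Eventually.of_forall hmem)
        exact this
      have hcomp : Tendsto (fun n => ψ (t n)) atTop (nhds (ψ l)) := by
        refine ((hcont l hlmem).tendsto).comp ?_
        exact tendsto_nhdsWithin_of_tendsto_nhds_of_eventually_within _ hl
          (Filter.Eventually.of_forall hmem)
      have hdiv : Tendsto (fun n => ψ (t n)) atTop atTop := by
        apply tendsto_atTop_mono haux
        have he : Tendsto (fun n : ℕ => ((3:ℝ)/2) ^ n) atTop atTop :=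
          tendsto_pow_atTop_atTop_of_one_lt (by norm_num)
        have hbase : Tendsto (fun x : ℝ => ψ t₀ ^ x) atTop atTop := by
          simp_rw [Real.rpow_def_of_pos hb0]
          exact Real.tendsto_exp_atTop.comp
            ((tendsto_const_mul_atTop_of_pos (Real.log_pos hψt₀)).mpr tendsto_id)
        exact hbase.comp he
      exact not_tendsto_atTop_of_tendsto_nhds hcomp hdiv
  have hlogpos : 0 < κ * Real.log (ψ t₀) / t₀ :=
    div_pos (mul_pos hκ (Real.log_pos hψt₀)) ht₀
  refine ⟨hconc1, htop, ?_, hlogpos⟩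
  intro n
  have h := hconc1 n
  have hlog := Real.log_le_log (Real.rpow_pos_of_pos hb0 _) h
  rw [Real.log_rpow hb0] at hlog
  rw [div_le_div_iff₀ ht₀ (htpos n)]
  calc κ * Real.log (ψ t₀) * t n = (κ * t n / t₀ * Real.log (ψ t₀)) * t₀ := by
        field_simp
    _ ≤ Real.log (ψ (t n)) * t₀ := by
        exact mul_le_mul_of_nonneg_right hlog ht₀.le
end
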